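/- arXiv:2206.02402 — 10 statements merged into one kernel-verified Lean document; each statement's English description precedes it below -/
import Mathlib

section
/- Let K be a field of characteristic p > 0 and let f ∈ K⟦X⟧ be the formal power series whose coefficient at X^{p^i} is a_i for each i ≥ 0 (where a : ℕ → K) and whose coefficients at all other exponents vanish. Assume f is algebraic over the polynomial ring K[X]. Then there exist natural numbers N and n and elements c_0,…,c_n ∈ K, not all zero, such that c_0·a_i^{p^n} + c_1·a_{i+1}^{p^{n-1}} + ⋯ + c_n·a_{i+n} = 0 for every i ≥ N. -/
/-!
Since `f` is algebraic over `K[X]`, a nonzero multiple of it is integral, so all powers of `f`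
lie in a finitely generated `K[X]`-module; hence `f, f ^ p, …, f ^ p ^ n` satisfy a nontrivial
relation `∑ q j * f ^ p ^ j = 0` with `q j ∈ K[X]`. In characteristic `p` the series `f ^ p ^ j`
has coefficient `a (s - j) ^ p ^ j` at `X ^ p ^ s` and is still supported on powers of `p`.
If `k` is the lowest degree occurring in the `q j`, then for large `s` the coefficient of
`X ^ (k + p ^ s)` in the relation only sees the products of `X ^ k` with `X ^ p ^ s`, because the
powers of `p` are too sparse; this gives the recurrence, with coefficients `(q j).coeff k`
in reverse order.
-/

open Polynomial PowerSeries

theorem IsIntegral.exists_sum_smul_pow_eq_zero {R A : Type*} [CommRing R] [Nontrivial R]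
    [Ring A] [Algebra R A] {x : A} (hx : IsIntegral R x) (e : ℕ → ℕ) :
    ∃ (n : ℕ) (c : Fin (n + 1) → R), (∃ j, c j ≠ 0) ∧ ∑ j, c j • x ^ e j = 0 := by
  have := Algebra.finite_adjoin_simple_of_isIntegral hx
  set n := Module.finrank R (Algebra.adjoin R {x})
  let v : Fin (n + 1) → Algebra.adjoin R {x} := fun j =>
    ⟨x ^ e j, pow_mem (Algebra.self_mem_adjoin_singleton R x) _⟩
  have hv : ¬LinearIndependent R v := fun h => by
    have := h.fintype_card_le_finrank
    rw [Fintype.card_fin] at this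
    omega
  obtain ⟨c, hc, j, hj⟩ := Fintype.not_linearIndependent_iff.mp hv
  exact ⟨n, c, ⟨j, hj⟩, by simpa [v] using congrArg Subtype.val hc⟩

theorem IsAlgebraic.exists_sum_smul_pow_eq_zero {R A : Type*} [CommRing R] [IsDomain R]
    [Ring A] [Algebra R A] {x : A} (hx : IsAlgebraic R x) (e : ℕ → ℕ) :
    ∃ (n : ℕ) (c : Fin (n + 1) → R), (∃ j, c j ≠ 0) ∧ ∑ j, c j • x ^ e j = 0 := by
  obtain ⟨y, hy, hyx⟩ := hx.exists_integral_multiple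
  obtain ⟨n, c, ⟨j, hj⟩, hc⟩ := hyx.exists_sum_smul_pow_eq_zero e
  refine ⟨n, fun j => c j * y ^ e j, ⟨j, mul_ne_zero hj (pow_ne_zero _ hy)⟩, ?_⟩
  simpa only [_root_.smul_pow, smul_smul] using hc

namespace PowerSeries

variable {R : Type*}

theorem coeff_pow_expChar_pow [CommSemiring R] {p : ℕ} [ExpChar R p] (g : R⟦X⟧) (j m : ℕ) :
    coeff m (g ^ p ^ j) = if p ^ j ∣ m then coeff (m / p ^ j) g ^ p ^ j else 0 := by
  have hpj : 0 < p ^ j := expChar_pow_pos R p j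
  calc coeff m (g ^ p ^ j)
      = (trunc (m + 1) (g ^ p ^ j)).coeff m := by rw [coeff_trunc, if_pos m.lt_succ_self]
    _ = ((trunc (m + 1) g) ^ p ^ j).coeff m := by
        rw [← trunc_trunc_pow, coeff_trunc, if_pos m.lt_succ_self, ← Polynomial.coe_pow,
          Polynomial.coeff_coe]
    _ = _ := by
        rw [← map_iterateFrobenius_expand, Polynomial.coeff_map, Polynomial.coeff_expand hpj]
        split_ifs with h
        · rw [coeff_trunc, if_pos (Nat.lt_succ_of_le (Nat.div_le_self m _))]; rfl
        · exact map_zero _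

theorem coeff_pow_expChar_pow_mul [CommSemiring R] {p : ℕ} [ExpChar R p] (g : R⟦X⟧) (j m : ℕ) :
    coeff (p ^ j * m) (g ^ p ^ j) = coeff m g ^ p ^ j := by
  rw [coeff_pow_expChar_pow, if_pos (dvd_mul_right _ _),
    Nat.mul_div_cancel_left _ (expChar_pow_pos R p j)]

def SupportedOnPowers [Semiring R] (p : ℕ) (g : R⟦X⟧) : Prop :=
  ∀ m, coeff m g ≠ 0 → ∃ i, m = p ^ i

theorem SupportedOnPowers.pow_expChar_pow [CommSemiring R] {p : ℕ} [ExpChar R p] {g : R⟦X⟧}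
    (hg : SupportedOnPowers p g) (j : ℕ) : SupportedOnPowers p (g ^ p ^ j) := by
  intro m hm
  rw [coeff_pow_expChar_pow] at hm
  split_ifs at hm with h
  · obtain ⟨i, hi⟩ := hg _ (ne_zero_pow (expChar_pow_pos R p j).ne' hm)
    exact ⟨j + i, by rw [pow_add, ← hi, Nat.mul_div_cancel' h]⟩
  · exact absurd rfl hm

theorem coeff_add_pow_succ_coe_mul_of_supportedOnPowers [Semiring R] {p : ℕ} (hp : 1 < p)
    {q : R[X]} {F : R⟦X⟧} {k s : ℕ} (hk : ∀ b < k, q.coeff b = 0) (hq : q.natDegree < p ^ s)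
    (hF : SupportedOnPowers p F) :
    coeff (k + p ^ (s + 1)) ((q : R⟦X⟧) * F) = q.coeff k * coeff (p ^ (s + 1)) F := by
  rw [coeff_mul, Finset.sum_eq_single (k, p ^ (s + 1)), Polynomial.coeff_coe]
  · rintro ⟨b, m⟩ hbm hne
    rw [Finset.HasAntidiagonal.mem_antidiagonal] at hbm
    rw [Polynomial.coeff_coe]
    rcases lt_or_ge b k with hb | hb
    · rw [hk b hb, zero_mul]
    rcases lt_or_ge q.natDegree b with hdeg | hdeg
    · rw [coeff_eq_zero_of_natDegree_lt hdeg, zero_mul]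
    suffices coeff m F = 0 by rw [this, mul_zero]
    by_contra hm
    obtain ⟨i, rfl⟩ := hF m hm
    -- `k < b < p ^ s` puts `p ^ i = k + p ^ (s + 1) - b` strictly between `p ^ s` and `p ^ (s + 1)`
    have hbk : b ≠ k := fun h => hne (Prod.ext h (by simp only; omega))
    have hps : p ^ s + p ^ s ≤ p ^ (s + 1) := by rw [pow_succ]; nlinarith
    have h1 : s < i := (Nat.pow_lt_pow_iff_right hp).mp (by omega)
    have h2 : i < s + 1 := (Nat.pow_lt_pow_iff_right hp).mp (by omega)
    omega
  · simp

theorem exists_linear_relation_coeff_pow_of_sum_coe_mul_eq_zero {ι : Type*} [Semiring R]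
    [Fintype ι] {p : ℕ} (hp : 1 < p) (q : ι → R[X]) (F : ι → R⟦X⟧) (hq : ∃ j, q j ≠ 0)
    (hF : ∀ j, SupportedOnPowers p (F j)) (hrel : ∑ j, (q j : R⟦X⟧) * F j = 0) :
    ∃ (N : ℕ) (c : ι → R), (∃ j, c j ≠ 0) ∧ ∀ s, N ≤ s → ∑ j, c j * coeff (p ^ s) (F j) = 0 := by
  classical
  have hex : ∃ k j, (q j).coeff k ≠ 0 :=
    let ⟨j, hj⟩ := hq
    ⟨_, j, leadingCoeff_ne_zero.mpr hj⟩
  obtain ⟨j, hj⟩ := Nat.find_spec hex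
  set D := Finset.univ.sup fun j => (q j).natDegree
  refine ⟨D + 1, fun j => (q j).coeff (Nat.find hex), ⟨j, hj⟩, fun s hs => ?_⟩
  obtain ⟨s, rfl⟩ : ∃ t, s = t + 1 := ⟨s - 1, by omega⟩
  have hdeg (j : ι) : (q j).natDegree < p ^ s :=
    calc (q j).natDegree ≤ D := Finset.le_sup (f := fun j => (q j).natDegree) (Finset.mem_univ j)
      _ < p ^ D := Nat.lt_pow_self hp
      _ ≤ p ^ s := Nat.pow_le_pow_right (by omega) (by omega)
  have hcoeff := congrArg (coeff (Nat.find hex + p ^ (s + 1))) hrel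
  rw [map_sum, map_zero] at hcoeff
  refine (Finset.sum_congr rfl fun j _ => ?_).trans hcoeff
  refine (coeff_add_pow_succ_coe_mul_of_supportedOnPowers hp (fun b hb => ?_) (hdeg j)
    (hF j)).symm
  by_contra h
  exact Nat.find_min hex hb ⟨j, h⟩

end PowerSeries

/-- Let `K` be a field of characteristic `p > 0` and let `f ∈ K⟦X⟧` be the
power series whose coefficient at `X^{p^i}` is `a i` and whose other coefficients vanish.
If `f` is algebraic over the polynomial ring `K[X]`, then there are `N`, `n` and elements
`c 0, …, c n ∈ K`, not all zero, such that
`c 0 · a_i^{p^n} + c 1 · a_{i+1}^{p^{n-1}} + ⋯ + c n · a_{i+n} = 0` for all `i ≥ N`. -/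
theorem statement1 {K : Type*} [Field K] {p : ℕ} [Fact p.Prime] [CharP K p]
    (a : ℕ → K) (f : PowerSeries K)
    (hcoeff : ∀ i : ℕ, PowerSeries.coeff (p ^ i) f = a i)
    (hcoeff' : ∀ m : ℕ, (∀ i : ℕ, m ≠ p ^ i) → PowerSeries.coeff m f = 0)
    (halg : ∃ Q : Polynomial (Polynomial K), Q ≠ 0 ∧
      Polynomial.eval₂ Polynomial.coeToPowerSeries.ringHom f Q = 0) :
    ∃ (N n : ℕ) (c : Fin (n + 1) → K), (∃ j, c j ≠ 0) ∧
      ∀ i : ℕ, N ≤ i →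
        ∑ j : Fin (n + 1), c j * (a (i + (j : ℕ))) ^ p ^ (n - (j : ℕ)) = 0 := by
  have halgebraMap : algebraMap K[X] K⟦X⟧ = Polynomial.coeToPowerSeries.ringHom := by
    refine RingHom.ext fun P => ?_
    rw [algebraMap_apply']
    simp
  obtain ⟨Q, hQ, hQf⟩ := halg
  have hf : IsAlgebraic K[X] f := ⟨Q, hQ, by rwa [aeval_def, halgebraMap]⟩
  obtain ⟨n, q, hq, hrel⟩ := hf.exists_sum_smul_pow_eq_zero (p ^ ·)
  have hsupp : SupportedOnPowers p f := fun m hm => by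
    by_contra! h
    exact hm (hcoeff' m h)
  obtain ⟨N, c, ⟨j, hj⟩, hc⟩ := exists_linear_relation_coeff_pow_of_sum_coe_mul_eq_zero
    (Fact.out : p.Prime).one_lt q (fun j => f ^ p ^ (j : ℕ)) hq
    (fun j => hsupp.pow_expChar_pow j)
    (by simpa only [Algebra.smul_def, halgebraMap, coeToPowerSeries.ringHom_apply] using hrel)
  refine ⟨N, n, fun j => c j.rev, ⟨j.rev, by simpa using hj⟩, fun i hi => ?_⟩
  rw [← hc (i + n) (by omega)]
  refine Fintype.sum_equiv Fin.revPerm _ _ fun j => ?_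
  have hj : (j : ℕ) ≤ n := Nat.lt_succ_iff.mp j.isLt
  rw [Fin.revPerm_apply, Fin.val_rev, show n + 1 - (j + 1) = n - j by omega,
    show i + n = n - j + (i + j) by omega, pow_add, coeff_pow_expChar_pow_mul, hcoeff]
end

section
/- Let K be an algebraically closed field of characteristic p > 0, n ≥ 1, and c_0,…,c_n ∈ K with c_0 ≠ 0 and c_n ≠ 0. Let z_1,…,z_n be an 𝔽_p-basis of the set of roots in K of P(X) = c_0·X + c_1·X^p + ⋯ + c_n·X^{p^n} (this root set is an 𝔽_p-vector space of dimension n). Then a sequence x : ℕ → K satisfies the linear recurrence c_0·x_k + c_1·x_{k+1}^p + ⋯ + c_n·x_{k+n}^{p^n} = 0 for every k ≥ 0 if and only if there exist λ_1,…,λ_n ∈ K such that for every k ≥ 0 one has x_k = z_1·λ_1^{1/p^k} + ⋯ + z_n·λ_n^{1/p^k}. -/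
open Polynomial in
lemma aux_isUnit {K : Type*} [Field K] {p : ℕ} [Fact p.Prime] [CharP K p]
    {n : ℕ} (hn : 1 ≤ n) (z : Fin n → K)
    (hinj : Set.InjOn (fun m : Fin n → ZMod p => ∑ j : Fin n, (m j).val • z j) Set.univ) :
    IsUnit (Matrix.of fun i j : Fin n => z j ^ p ^ (i : ℕ)) := by
  have hp : p.Prime := Fact.out
  classical
  rw [← Matrix.vecMul_injective_iff_isUnit]
  -- reduce to trivial kernel
  have hker : ∀ ν : Fin n → K,
      (Matrix.of fun i j : Fin n => z j ^ p ^ (i : ℕ)).vecMul ν = 0 → ν = 0 := by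
    intro ν hν
    by_contra hne
    obtain ⟨i0, hi0⟩ : ∃ i0, ν i0 ≠ 0 := by
      by_contra h; push_neg at h; exact hne (funext h)
    set B : K[X] := ∑ i : Fin n, Polynomial.C (ν i) * Polynomial.X ^ (p ^ (i : ℕ)) with hB
    have hcoeff : B.coeff (p ^ (i0 : ℕ)) = ν i0 := by
      rw [hB, Polynomial.finset_sum_coeff]
      rw [Finset.sum_eq_single i0]
      · simp
      · intro b _ hb
        rw [Polynomial.coeff_C_mul, Polynomial.coeff_X_pow, if_neg, mul_zero]
        intro h
        exact hb (Fin.ext (Nat.pow_right_injective hp.two_le h.symm))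
      · simp
    have hBne : B ≠ 0 := fun h => hi0 (by rw [← hcoeff, h, Polynomial.coeff_zero])
    have hdeg : B.natDegree < p ^ n := by
      have : B.natDegree ≤ p ^ (n - 1) := by
        apply Polynomial.natDegree_sum_le_of_forall_le
        intro i _
        refine le_trans (Polynomial.natDegree_C_mul_le _ _) ?_
        rw [Polynomial.natDegree_X_pow]
        exact Nat.pow_le_pow_right hp.one_lt.le (by omega)
      exact lt_of_le_of_lt this (Nat.pow_lt_pow_right hp.one_lt (by omega))
    -- all 𝔽_p-combinations of the z j are roots of B
    have hroot : ∀ m : Fin n → ZMod p, B.IsRoot (∑ j : Fin n, (m j).val • z j) := by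
      intro m
      have heval : B.eval (∑ j : Fin n, (m j).val • z j)
          = ∑ i : Fin n, ν i * (∑ j : Fin n, (m j).val • z j) ^ p ^ (i : ℕ) := by
        rw [hB, Polynomial.eval_finset_sum]; simp
      rw [Polynomial.IsRoot, heval]
      have hpow : ∀ i : Fin n, (∑ j : Fin n, (m j).val • z j) ^ p ^ (i : ℕ)
          = ∑ j : Fin n, (m j).val • z j ^ p ^ (i : ℕ) := by
        intro i
        rw [← iterateFrobenius_def (R := K) p (i : ℕ), map_sum]
        refine Finset.sum_congr rfl fun j _ => ?_
        rw [map_nsmul, iterateFrobenius_def]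
      calc ∑ i : Fin n, ν i * (∑ j : Fin n, (m j).val • z j) ^ p ^ (i : ℕ)
          = ∑ i : Fin n, ∑ j : Fin n, (m j).val • (ν i * z j ^ p ^ (i : ℕ)) := by
            refine Finset.sum_congr rfl fun i _ => ?_
            rw [hpow i, Finset.mul_sum]
            exact Finset.sum_congr rfl fun j _ => mul_smul_comm _ _ _
        _ = ∑ j : Fin n, (m j).val • (∑ i : Fin n, ν i * z j ^ p ^ (i : ℕ)) := by
            rw [Finset.sum_comm]
            exact Finset.sum_congr rfl fun j _ => (Finset.smul_sum).symm
        _ = 0 := by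
            refine Finset.sum_eq_zero fun j _ => ?_
            have := congrFun hν j
            simp only [Matrix.vecMul, dotProduct, Matrix.of_apply, Pi.zero_apply] at this
            rw [this, smul_zero]
    -- count roots
    set S : Finset K := Finset.image (fun m : Fin n → ZMod p => ∑ j : Fin n, (m j).val • z j)
      Finset.univ with hS
    have hcard : S.card = p ^ n := by
      rw [hS, Finset.card_image_of_injOn (fun a _ b _ h => hinj (Set.mem_univ a) (Set.mem_univ b) h)]
      simp [ZMod.card]
    have hsub : S ⊆ B.roots.toFinset := by
      intro w hw
      rw [hS, Finset.mem_image] at hw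
      obtain ⟨m, _, rfl⟩ := hw
      rw [Multiset.mem_toFinset, Polynomial.mem_roots hBne]
      exact hroot m
    have : p ^ n ≤ B.natDegree :=
      hcard ▸ le_trans (le_trans (Finset.card_le_card hsub) (Multiset.toFinset_card_le _))
        (Polynomial.card_roots' B)
    omega
  intro a b hab
  simp only at hab
  have h0 : (Matrix.of fun i j : Fin n => z j ^ p ^ (i : ℕ)).vecMul (a - b) = 0 := by
    rw [Matrix.sub_vecMul, hab, sub_self]
  exact sub_eq_zero.mp (hker _ h0)

/-- Let `K` be an algebraically closed field of characteristic `p > 0`,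
`n ≥ 1`, and `c 0, …, c n ∈ K` with `c 0 ≠ 0 ≠ c n`.  Let `z 1, …, z n` be an `𝔽_p`-basis
of the root set of `P(X) = Σ_i c i · X^{p^i}` (expressed by saying that the map
`(𝔽_p)^n → K`, `m ↦ Σ_j m_j • z_j`, is a bijection onto the root set).  Then a sequence
`x : ℕ → K` satisfies `Σ_i c i · x_{k+i}^{p^i} = 0` for all `k` iff there exist
`λ_1, …, λ_n ∈ K` with `x_k = Σ_j z_j · λ_j^{1/p^k}` for all `k` (the `p^k`-th root
`λ_j^{1/p^k}` being expressed by a `μ_j` with `μ_j^{p^k} = λ_j`). -/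
theorem statement3 {K : Type*} [Field K] [IsAlgClosed K] {p : ℕ} [Fact p.Prime] [CharP K p]
    {n : ℕ} (hn : 1 ≤ n) (c : Fin (n + 1) → K) (hc0 : c 0 ≠ 0) (hcn : c (Fin.last n) ≠ 0)
    (z : Fin n → K)
    (hbasis : Set.BijOn (fun m : Fin n → ZMod p => ∑ j : Fin n, (m j).val • z j)
      Set.univ {x : K | ∑ i : Fin (n + 1), c i * x ^ p ^ (i : ℕ) = 0})
    (x : ℕ → K) :
    (∀ k : ℕ, ∑ i : Fin (n + 1), c i * (x (k + (i : ℕ))) ^ p ^ (i : ℕ) = 0) ↔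
      ∃ lam : Fin n → K, ∀ k : ℕ, ∃ μ : Fin n → K,
        (∀ j, μ j ^ p ^ k = lam j) ∧ x k = ∑ j : Fin n, z j * μ j := by
  classical
  have hp : p.Prime := Fact.out
  haveI : Fact (1 < p) := ⟨hp.one_lt⟩
  have hfrobinj : ∀ k : ℕ, Function.Injective (fun a : K => a ^ p ^ k) := by
    intro k a b h
    exact (iterateFrobenius K p k).injective (by simpa [iterateFrobenius_def] using h)
  -- each z j is a root of P
  have froot : ∀ j, ∑ i : Fin (n + 1), c i * z j ^ p ^ (i : ℕ) = 0 := by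
    intro j
    have key : ∑ j' : Fin n, (((Pi.single j (1 : ZMod p)) : Fin n → ZMod p) j').val • z j' = z j := by
      rw [Finset.sum_eq_single j]
      · rw [Pi.single_eq_same, ZMod.val_one, one_smul]
      · intro b _ hb; rw [Pi.single_eq_of_ne hb]; simp
      · simp
    have h1 := hbasis.mapsTo (Set.mem_univ (Pi.single j (1 : ZMod p)))
    simp only [Set.mem_setOf_eq] at h1
    rw [key] at h1
    exact h1
  -- Frobenius expansion of products
  have hexp : ∀ (i : ℕ) (w : Fin n → K),
      (∑ j : Fin n, z j * w j) ^ p ^ i = ∑ j : Fin n, z j ^ p ^ i * w j ^ p ^ i := by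
    intro i w
    rw [← iterateFrobenius_def (R := K) p i, map_sum]
    refine Finset.sum_congr rfl fun j _ => ?_
    rw [map_mul, iterateFrobenius_def, iterateFrobenius_def]
  constructor
  · intro hx
    set M := Matrix.of fun i j : Fin n => z j ^ p ^ (i : ℕ) with hMdef
    have hM : IsUnit M := aux_isUnit hn z hbasis.injOn
    have hMinj : Function.Injective M.mulVec := Matrix.mulVec_injective_iff_isUnit.mpr hM
    have hMsurj : Function.Surjective M.mulVec := Matrix.mulVec_surjective_iff_isUnit.mpr hM
    have hsol : ∀ k : ℕ, ∃ μ : Fin n → K, ∀ i : Fin n,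
        ∑ j : Fin n, z j ^ p ^ (i : ℕ) * μ j = x (k + (i : ℕ)) ^ p ^ (i : ℕ) := by
      intro k
      obtain ⟨μ, hμ⟩ := hMsurj (fun i => x (k + (i : ℕ)) ^ p ^ (i : ℕ))
      refine ⟨μ, fun i => ?_⟩
      have := congrFun hμ i
      simpa [Matrix.mulVec, dotProduct, hMdef] using this
    choose μ hμ using hsol
    have hx0 : ∀ k, x k = ∑ j : Fin n, z j * μ k j := by
      intro k
      have := hμ k ⟨0, by omega⟩
      simpa using this.symm
    have claimA : ∀ (k i : ℕ), 1 ≤ i → i ≤ n →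
        ∑ j : Fin n, z j ^ p ^ i * μ (k + 1) j ^ p = x (k + i) ^ p ^ i := by
      intro k i h1 h2
      have hi' : i - 1 < n := by omega
      have h := hμ (k + 1) ⟨i - 1, hi'⟩
      simp only at h
      have e1 : (∑ j : Fin n, z j ^ p ^ (i - 1) * μ (k + 1) j) ^ p
          = ∑ j : Fin n, z j ^ p ^ i * μ (k + 1) j ^ p := by
        rw [← frobenius_def, map_sum]
        refine Finset.sum_congr rfl fun j _ => ?_
        rw [frobenius_def, mul_pow, ← pow_mul, ← pow_succ, Nat.sub_add_cancel h1]
      rw [← e1, h, ← pow_mul, ← pow_succ, Nat.sub_add_cancel h1]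
      congr 2
      omega
    have hstep : ∀ k j, μ (k + 1) j ^ p = μ k j := by
      intro k
      have heq : M.mulVec (fun j => μ (k + 1) j ^ p) = M.mulVec (μ k) := by
        funext i
        show ∑ j : Fin n, M i j * μ (k + 1) j ^ p = ∑ j : Fin n, M i j * μ k j
        simp only [hMdef, Matrix.of_apply]
        rw [show ∑ j : Fin n, z j ^ p ^ (i : ℕ) * μ k j = x (k + (i : ℕ)) ^ p ^ (i : ℕ)
          from hμ k i]
        rcases Nat.eq_zero_or_pos (i : ℕ) with h0 | h0
        · rw [h0]
          simp only [pow_zero, pow_one, add_zero]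
          -- ∑ j, z j * μ (k+1) j ^ p = x k
          apply mul_left_cancel₀ hc0
          have hA : ∀ i' : Fin n, ∑ j : Fin n, z j ^ p ^ ((i' : ℕ) + 1) * μ (k + 1) j ^ p
              = x (k + ((i' : ℕ) + 1)) ^ p ^ ((i' : ℕ) + 1) :=
            fun i' => claimA k ((i' : ℕ) + 1) (by omega) (by omega)
          have hr := hx k
          rw [Fin.sum_univ_succ] at hr
          simp only [Fin.val_zero, Fin.val_succ, pow_zero, pow_one, add_zero] at hr
          have hz : ∀ j, c 0 * z j = -∑ i' : Fin n, c i'.succ * z j ^ p ^ ((i' : ℕ) + 1) := by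
            intro j
            have hf := froot j
            rw [Fin.sum_univ_succ] at hf
            simp only [Fin.val_zero, Fin.val_succ, pow_zero, pow_one] at hf
            linear_combination hf
          calc c 0 * ∑ j : Fin n, z j * μ (k + 1) j ^ p
              = ∑ j : Fin n, (c 0 * z j) * μ (k + 1) j ^ p := by
                rw [Finset.mul_sum]
                exact Finset.sum_congr rfl fun j _ => by ring
            _ = ∑ j : Fin n, (-∑ i' : Fin n, c i'.succ * z j ^ p ^ ((i' : ℕ) + 1))
                  * μ (k + 1) j ^ p := by
                exact Finset.sum_congr rfl fun j _ => by rw [hz j]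
            _ = -∑ i' : Fin n, c i'.succ *
                  ∑ j : Fin n, z j ^ p ^ ((i' : ℕ) + 1) * μ (k + 1) j ^ p := by
                simp only [neg_mul, Finset.sum_mul, ← Finset.sum_neg_distrib]
                rw [Finset.sum_comm]
                refine Finset.sum_congr rfl fun i' _ => ?_
                rw [Finset.mul_sum, ← Finset.sum_neg_distrib]
                exact Finset.sum_congr rfl fun j _ => by ring
            _ = -∑ i' : Fin n, c i'.succ * x (k + ((i' : ℕ) + 1)) ^ p ^ ((i' : ℕ) + 1) := by
                refine congrArg Neg.neg (Finset.sum_congr rfl fun i' _ => ?_)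
                rw [hA i']
            _ = c 0 * x k := by linear_combination -hr
        · exact claimA k (i : ℕ) h0 (by omega)
      intro j
      exact congrFun (hMinj heq) j
    have hpow : ∀ k j, μ k j ^ p ^ k = μ 0 j := by
      intro k
      induction k with
      | zero => intro j; simp
      | succ k ih =>
        intro j
        rw [pow_succ', pow_mul, hstep k j]
        exact ih j
    exact ⟨μ 0, fun k => ⟨μ k, hpow k, hx0 k⟩⟩
  · -- reverse direction
    rintro ⟨lam, h⟩ k
    choose μ hμ hxm using h
    have hcompat : ∀ (m i : ℕ) (j : Fin n), μ (m + i) j ^ p ^ i = μ m j := by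
      intro m i j
      apply hfrobinj m
      show (μ (m + i) j ^ p ^ i) ^ p ^ m = μ m j ^ p ^ m
      rw [← pow_mul, ← pow_add, add_comm i m, hμ (m + i) j, hμ m j]
    calc ∑ i : Fin (n + 1), c i * x (k + (i : ℕ)) ^ p ^ (i : ℕ)
        = ∑ i : Fin (n + 1), ∑ j : Fin n, (c i * z j ^ p ^ (i : ℕ)) * μ k j := by
          refine Finset.sum_congr rfl fun i _ => ?_
          rw [hxm (k + (i : ℕ)), hexp, Finset.mul_sum]
          refine Finset.sum_congr rfl fun j _ => ?_
          rw [hcompat k (i : ℕ) j]; ring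
      _ = ∑ j : Fin n, (∑ i : Fin (n + 1), c i * z j ^ p ^ (i : ℕ)) * μ k j := by
          rw [Finset.sum_comm]
          exact Finset.sum_congr rfl fun j _ => (Finset.sum_mul _ _ _).symm
      _ = 0 := Finset.sum_eq_zero fun j _ => by rw [froot j, zero_mul]
end

section
/- Let K be an algebraically closed field of characteristic p > 0, n ≥ 1, and c_0,…,c_n ∈ K with c_0 ≠ 0 and c_n ≠ 0. Let z_1,…,z_n be an 𝔽_p-basis of the set of roots in K of P(X) = c_0·X^{p^n} + c_1·X^{p^{n-1}} + ⋯ + c_n·X (this root set is an 𝔽_p-vector space of dimension n, since the linear coefficient c_n is nonzero). Then a sequence x : ℕ → K satisfies the reversed linear recurrence c_0·x_k^{p^n} + c_1·x_{k+1}^{p^{n-1}} + ⋯ + c_n·x_{k+n} = 0 for every k ≥ 0 if and only if there exist λ_1,…,λ_n ∈ K such that for every k ≥ 0 one has x_k = z_1·λ_1^{p^k} + ⋯ + z_n·λ_n^{p^k}. -/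
/-!
The operator `x ↦ (∑ i, c i * x (k + i) ^ p ^ (n - i))ₖ` is additive, because `y ↦ y ^ p ^ e` is,
and it kills `k ↦ z * λ ^ p ^ k` whenever `z` is a root of `P`; summing gives one direction.
Conversely, since `c n ≠ 0` a solution is determined by `x 0, …, x (n - 1)`, and these initial
values are attained by some `λ`: raised to the power `p ^ (n - 1 - k)`, the `k`-th equation becomes
linear in `λ j ^ p ^ (n - 1)`, with the Moore matrix `(z j ^ p ^ r)` as coefficient matrix. That
matrix is invertible since the additive polynomial `∑ r, v r * X ^ p ^ r` has degree `< p ^ n`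
and so cannot vanish on the `p ^ n` elements of the `𝔽_p`-span of `z` unless `v = 0`.
-/

open Polynomial Finset

def mooreMatrix {K : Type*} [CommRing K] (p : ℕ) {n : ℕ} (z : Fin n → K) :
    Matrix (Fin n) (Fin n) K :=
  Matrix.of fun r j => z j ^ p ^ (r : ℕ)

section CharP

variable {K : Type*} [Field K] {p : ℕ} [Fact p.Prime] [CharP K p] {n : ℕ}

theorem eq_zero_of_forall_sum_mul_pow_eq_zero {z : Fin n → K}
    (hz : Function.Injective fun m : Fin n → ZMod p => ∑ j, (m j).val • z j)
    {v : Fin n → K} (hv : ∀ j, ∑ r, v r * z j ^ p ^ (r : ℕ) = 0) : v = 0 := by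
  rcases Nat.eq_zero_or_pos n with rfl | hn
  · exact Subsingleton.elim _ _
  set Q : K[X] := ∑ r, C (v r) * X ^ p ^ (r : ℕ)
  have hQ_eval (y : K) : Q.eval y = ∑ r, v r * iterateFrobenius K p r y := by
    simp [Q, eval_finsetSum, iterateFrobenius_def]
  have hQ_span (m : Fin n → ZMod p) : Q.eval (∑ j, (m j).val • z j) = 0 := by
    simp only [hQ_eval, map_sum, map_nsmul, mul_sum, mul_smul_comm]
    rw [sum_comm]
    simp only [← smul_sum, iterateFrobenius_def, hv, smul_zero, sum_const_zero]
  have hQ_deg : Q.natDegree < Fintype.card (Fin n → ZMod p) := by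
    have hp := (Fact.out : p.Prime).one_lt
    calc Q.natDegree ≤ p ^ (n - 1) :=
          natDegree_sum_le_of_forall_le _ _ fun r _ => (natDegree_C_mul_X_pow_le _ _).trans
            (Nat.pow_le_pow_right (by omega) (by omega))
      _ < p ^ n := Nat.pow_lt_pow_right hp (by omega)
      _ = Fintype.card (Fin n → ZMod p) := by simp
  have hQ : Q = 0 := eq_zero_of_natDegree_lt_card_of_eval_eq_zero Q hz hQ_span hQ_deg
  ext r
  have hpow : Function.Injective fun r : Fin n => p ^ (r : ℕ) :=
    (Nat.pow_right_injective (Fact.out : p.Prime).two_le).comp Fin.val_injective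
  simpa [Q, finsetSum_coeff, coeff_C_mul_X_pow, hpow.eq_iff] using
    congrArg (coeff · (p ^ (r : ℕ))) hQ

theorem det_mooreMatrix_ne_zero {z : Fin n → K}
    (hz : Function.Injective fun m : Fin n → ZMod p => ∑ j, (m j).val • z j) :
    (mooreMatrix p z).det ≠ 0 := by
  intro h
  obtain ⟨v, hv0, hv⟩ := Matrix.exists_vecMul_eq_zero_iff.mpr h
  refine hv0 (eq_zero_of_forall_sum_mul_pow_eq_zero hz fun j => ?_)
  simpa [Matrix.vecMul, dotProduct, mooreMatrix] using congrFun hv j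

theorem exists_sum_mul_pow_eq [PerfectRing K p] {z : Fin n → K}
    (hz : Function.Injective fun m : Fin n → ZMod p => ∑ j, (m j).val • z j) (a : Fin n → K) :
    ∃ lam : Fin n → K, ∀ k : Fin n, ∑ j, z j * lam j ^ p ^ (k : ℕ) = a k := by
  obtain ⟨μ, hμ⟩ := Matrix.mulVec_surjective_iff_isUnit.mpr
    ((Matrix.isUnit_iff_isUnit_det _).mpr (det_mooreMatrix_ne_zero hz).isUnit)
    fun r => a r.rev ^ p ^ (r : ℕ)
  refine ⟨fun j => (iterateFrobeniusEquiv K p (n - 1)).symm (μ j), fun k => ?_⟩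
  apply iterateFrobenius_inj K p (k.rev : ℕ)
  have hk := congrFun hμ k.rev
  simp only [Matrix.mulVec, dotProduct, mooreMatrix, Matrix.of_apply, Fin.rev_rev] at hk
  rw [iterateFrobenius_def, iterateFrobenius_def, sum_pow_char_pow, ← hk]
  refine sum_congr rfl fun j _ => ?_
  rw [mul_pow, ← pow_mul, ← pow_add, Fin.val_rev, show (k : ℕ) + (n - (k + 1)) = n - 1 by omega]
  congr 1
  simpa only [iterateFrobeniusEquiv_apply, iterateFrobenius_def] using
    (iterateFrobeniusEquiv K p (n - 1)).apply_symm_apply (μ j)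

variable (p) in
def frobeniusRecurrence (c : Fin (n + 1) → K) : (ℕ → K) →+ (ℕ → K) where
  toFun x k := ∑ i, c i * x (k + i) ^ p ^ (n - i)
  map_zero' := by ext; simp [(Fact.out : p.Prime).ne_zero]
  map_add' x y := by ext; simp [add_pow_char_pow, mul_add, sum_add_distrib]

theorem frobeniusRecurrence_eq_zero_iff {c : Fin (n + 1) → K} {x : ℕ → K} :
    frobeniusRecurrence p c x = 0 ↔ ∀ k, ∑ i, c i * x (k + i) ^ p ^ (n - i) = 0 :=
  funext_iff

theorem frobeniusRecurrence_mul_pow {c : Fin (n + 1) → K} {z : K}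
    (hz : ∑ i, c i * z ^ p ^ (n - i) = 0) (lam : K) :
    frobeniusRecurrence p c (fun k => z * lam ^ p ^ k) = 0 := by
  ext k
  calc ∑ i : Fin (n + 1), c i * (z * lam ^ p ^ (k + i)) ^ p ^ (n - i)
      = ∑ i : Fin (n + 1), c i * z ^ p ^ (n - i) * lam ^ p ^ (k + n) := by
        refine sum_congr rfl fun i _ => ?_
        rw [mul_pow, ← pow_mul, ← pow_add, show k + i + (n - i) = k + n by omega, mul_assoc]
    _ = 0 := by rw [← sum_mul, hz, zero_mul]

theorem eq_zero_of_frobeniusRecurrence_eq_zero {c : Fin (n + 1) → K} (hcn : c (Fin.last n) ≠ 0)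
    {x : ℕ → K} (hx : frobeniusRecurrence p c x = 0) (hinit : ∀ k < n, x k = 0) : x = 0 := by
  ext k
  induction k using Nat.strong_induction_on with
  | _ k ih =>
    rcases lt_or_ge k n with hk | hk
    · exact hinit k hk
    obtain ⟨m, rfl⟩ := Nat.exists_eq_add_of_le' hk
    have hm := congrFun hx m
    simp only [frobeniusRecurrence, AddMonoidHom.coe_mk, ZeroHom.coe_mk, Fin.sum_univ_castSucc,
      Fin.val_castSucc, Fin.val_last, Nat.sub_self, pow_zero, pow_one, Pi.zero_apply] at hm
    have hlower : ∑ i : Fin n, c i.castSucc * x (m + i) ^ p ^ (n - i) = 0 :=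
      sum_eq_zero fun i _ => by
        rw [ih _ (by omega), Pi.zero_apply, zero_pow (pow_ne_zero _ (Fact.out : p.Prime).ne_zero),
          mul_zero]
    rw [hlower, zero_add] at hm
    exact (mul_eq_zero.mp hm).resolve_left hcn

end CharP

theorem statement4_general {K : Type*} [Field K] [IsAlgClosed K] {p : ℕ} [Fact p.Prime] [CharP K p]
    {n : ℕ} (c : Fin (n + 1) → K) (hcn : c (Fin.last n) ≠ 0)
    (z : Fin n → K)
    (hbasis : Set.BijOn (fun m : Fin n → ZMod p => ∑ j : Fin n, (m j).val • z j)
      Set.univ {x : K | ∑ i : Fin (n + 1), c i * x ^ p ^ (n - (i : ℕ)) = 0})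
    (x : ℕ → K) :
    (∀ k : ℕ, ∑ i : Fin (n + 1), c i * (x (k + (i : ℕ))) ^ p ^ (n - (i : ℕ)) = 0) ↔
      ∃ lam : Fin n → K, ∀ k : ℕ, x k = ∑ j : Fin n, z j * (lam j) ^ p ^ k := by
  have hroot (j : Fin n) : ∑ i, c i * z j ^ p ^ (n - i) = 0 := by
    simpa [Pi.single_apply, apply_ite ZMod.val, ZMod.val_one] using
      hbasis.mapsTo (Set.mem_univ (Pi.single j (1 : ZMod p)))
  have hsol (lam : Fin n → K) :
      frobeniusRecurrence p c (fun k => ∑ j, z j * lam j ^ p ^ k) = 0 := by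
    rw [show (fun k => ∑ j, z j * lam j ^ p ^ k) = ∑ j, fun k => z j * lam j ^ p ^ k by
      ext; simp, map_sum]
    exact sum_eq_zero fun j _ => frobeniusRecurrence_mul_pow (hroot j) _
  rw [← frobeniusRecurrence_eq_zero_iff]
  constructor
  · intro hx
    obtain ⟨lam, hlam⟩ :=
      exists_sum_mul_pow_eq (Set.injOn_univ.mp hbasis.injOn) fun k : Fin n => x k
    have hdiff := eq_zero_of_frobeniusRecurrence_eq_zero hcn
      (x := x - fun k => ∑ j, z j * lam j ^ p ^ k) (by rw [map_sub, hx, hsol, sub_zero])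
      fun k hk => sub_eq_zero.mpr (hlam ⟨k, hk⟩).symm
    exact ⟨lam, congrFun (sub_eq_zero.mp hdiff)⟩
  · rintro ⟨lam, hlam⟩
    rw [funext hlam]
    exact hsol lam

/-- Let `K` be an algebraically closed field of characteristic `p > 0`,
`n ≥ 1`, and `c 0, …, c n ∈ K` with `c 0 ≠ 0 ≠ c n`.  Let `z 1, …, z n` be an `𝔽_p`-basis
of the root set of `P(X) = Σ_i c i · X^{p^{n-i}}` (expressed by saying that the map
`(𝔽_p)^n → K`, `m ↦ Σ_j m_j • z_j`, is a bijection onto the root set).  Then a sequence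
`x : ℕ → K` satisfies the reversed recurrence `Σ_i c i · x_{k+i}^{p^{n-i}} = 0` for all
`k` iff there exist `λ_1, …, λ_n ∈ K` with `x_k = Σ_j z_j · λ_j^{p^k}` for all `k`. -/
theorem statement4 {K : Type*} [Field K] [IsAlgClosed K] {p : ℕ} [Fact p.Prime] [CharP K p]
    {n : ℕ} (hn : 1 ≤ n) (c : Fin (n + 1) → K) (hc0 : c 0 ≠ 0) (hcn : c (Fin.last n) ≠ 0)
    (z : Fin n → K)
    (hbasis : Set.BijOn (fun m : Fin n → ZMod p => ∑ j : Fin n, (m j).val • z j)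
      Set.univ {x : K | ∑ i : Fin (n + 1), c i * x ^ p ^ (n - (i : ℕ)) = 0})
    (x : ℕ → K) :
    (∀ k : ℕ, ∑ i : Fin (n + 1), c i * (x (k + (i : ℕ))) ^ p ^ (n - (i : ℕ)) = 0) ↔
      ∃ lam : Fin n → K, ∀ k : ℕ, x k = ∑ j : Fin n, z j * (lam j) ^ p ^ k :=
  statement4_general c hcn z hbasis x
end

section
/- Let A be a Noetherian integral domain with fraction field K, and let v be an additive real-valued valuation on K such that v(a) ≥ 0 for every nonzero a ∈ A. Then the value semigroup Γ := {v(a) : a ∈ A, a ≠ 0} ⊆ [0, ∞) is discrete; more precisely, for every real number ρ the set Γ ∩ [0, ρ] is finite. -/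
/-!
As `v ≥ 0` on `A`, the sets `{a | γ ≤ v a}` are ideals, antitone in `γ`, so the ascending chain
condition makes the values of `v` on `A` well-founded; in particular the positive values are
bounded below by some `γ > 0`. Hence every coefficient `f` has `v f = 0` or `v f ≥ γ`, and elements
`a_t` with distinct values `t ∈ [c, c + γ)` stay independent modulo `{v ≥ c + γ}`: by the
ultrametric inequality a combination `∑ f_t a_t` has value one of the `t` or at least `c + γ`.
If `[c, c + γ)` contained infinitely many values, the ideals `{v ≥ c + γ} + (a_t)_{t ∈ F}`, `F`
finite, would have no maximal element. Finitely many windows of length `γ` cover `[0, ρ]`.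
-/

open Set

namespace AddValuation

section Ring

variable {R Γ₀ : Type*} [Ring R] [LinearOrderedAddCommMonoidWithTop Γ₀] (v : AddValuation R Γ₀)

/-- Summands with pairwise distinct values below `δ` cannot cancel. -/
theorem map_add_sum_mem_union_Ici (F : Finset Γ₀) (y : Γ₀ → R) {δ : Γ₀} {b : R}
    (hb : δ ≤ v b) (hy : ∀ t ∈ F, v (y t) = t ∨ δ ≤ v (y t)) :
    v (b + ∑ t ∈ F, y t) ∈ (F : Set Γ₀) ∪ Ici δ := by
  classical
  induction F using Finset.induction_on with
  | empty => simpa using hb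
  | insert t F htF ih =>
    set x := b + ∑ s ∈ F, y s
    have hx := ih fun s hs => hy s (Finset.mem_insert_of_mem hs)
    have hyt := hy t (Finset.mem_insert_self t F)
    rw [Finset.sum_insert htF, add_left_comm, Finset.coe_insert]
    by_cases heq : v (y t) = v x
    · have hδ : δ ≤ v x := by
        rcases hx with hxF | hxδ
        · rcases hyt with hyt | hyt
          · exact absurd (hyt ▸ heq ▸ hxF) htF
          · exact heq ▸ hyt
        · exact hxδ
      exact Or.inr (v.map_le_add (heq ▸ hδ) hδ)
    · rw [v.map_add_of_distinct_val heq]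
      rcases min_choice (v (y t)) (v x) with h | h <;> rw [h]
      · rcases hyt with hyt | hyt
        · exact Or.inl (Or.inl hyt)
        · exact Or.inr hyt
      · rcases hx with hxF | hxδ
        · exact Or.inl (Or.inr hxF)
        · exact Or.inr hxδ

end Ring

section CommRing

variable {R Γ₀ : Type*} [CommRing R] [LinearOrderedAddCommMonoidWithTop Γ₀] (v : AddValuation R Γ₀)

def geIdeal (hv : ∀ r, 0 ≤ v r) (γ : Γ₀) : Ideal R where
  carrier := {r | γ ≤ v r}
  zero_mem' := by simp
  add_mem' := v.map_le_add
  smul_mem' s r hr :=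
    calc γ = 0 + γ := (zero_add γ).symm
      _ ≤ v s + v r := add_le_add (hv s) hr
      _ = v (s • r) := (v.map_mul s r).symm

theorem notMem_geIdeal_sup_span (hv : ∀ r, 0 ≤ v r) {γ : Γ₀} (hγ : ∀ r, 0 < v r → γ ≤ v r)
    {c : Γ₀} {F : Finset Γ₀} {a : Γ₀ → R} (ha : ∀ t ∈ F, v (a t) = t ∧ c ≤ t) {x : R}
    (hx : v x < c + γ) (hxF : v x ∉ F) : x ∉ geIdeal v hv (c + γ) ⊔ Ideal.span (a '' F) := by
  intro hmem
  obtain ⟨b, hb, z, hz, rfl⟩ := Submodule.mem_sup.mp hmem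
  obtain ⟨f, rfl⟩ := (Submodule.mem_span_image_finset_iff_exists_fun' R).mp hz
  have hterm : ∀ t ∈ F, v (f t • a t) = t ∨ c + γ ≤ v (f t • a t) := by
    intro t ht
    obtain ⟨hat, hct⟩ := ha t ht
    rw [smul_eq_mul, v.map_mul, hat]
    rcases (hv (f t)).eq_or_lt with h0 | hpos
    · exact Or.inl (by rw [← h0, zero_add])
    · exact Or.inr (by rw [add_comm c]; exact add_le_add (hγ _ hpos) hct)
  rcases v.map_add_sum_mem_union_Ici F _ hb hterm with h | h
  · exact hxF h
  · exact not_le.mpr hx h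

variable [IsNoetherianRing R]

theorem isWF_range (hv : ∀ r, 0 ≤ v r) : (range v).IsWF := by
  refine (StrictAnti.wellFoundedLT (f := fun γ : range v => geIdeal v hv γ) ?_).wf
  rintro ⟨_, r, rfl⟩ ⟨γ, _⟩ hlt
  exact SetLike.lt_iff_le_and_exists.mpr
    ⟨fun s hs => le_of_lt (lt_of_lt_of_le hlt hs), r, le_rfl, not_le.mpr hlt⟩

theorem exists_pos_le_of_pos [Nontrivial Γ₀] (hv : ∀ r, 0 ≤ v r) :
    ∃ γ : Γ₀, 0 < γ ∧ ∀ r, 0 < v r → γ ≤ v r := by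
  have hwf : (range v ∩ Ioi 0).IsWF := (isWF_range v hv).mono inter_subset_left
  have htop : (0 : Γ₀) < ⊤ := by
    obtain ⟨a, ha⟩ := exists_ne (⊤ : Γ₀)
    exact lt_top_iff_ne_top.2 fun h => ha (by rw [← add_zero a, h, add_top])
  have hne : (range v ∩ Ioi 0).Nonempty := ⟨⊤, ⟨0, v.map_zero⟩, htop⟩
  exact ⟨hwf.min hne, (hwf.min_mem hne).2, fun r hr => hwf.min_le hne ⟨⟨r, rfl⟩, hr⟩⟩

theorem finite_range_inter_Ico (hv : ∀ r, 0 ≤ v r) {γ : Γ₀} (hγ : ∀ r, 0 < v r → γ ≤ v r)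
    (c : Γ₀) : (range v ∩ Ico c (c + γ)).Finite := by
  set S := range v ∩ Ico c (c + γ)
  by_contra hS
  choose! a ha using fun t (ht : t ∈ S) => ht.1
  let J : Finset Γ₀ → Ideal R := fun F => geIdeal v hv (c + γ) ⊔ Ideal.span (a '' F)
  obtain ⟨_, ⟨F, hFS, rfl⟩, hmax⟩ := set_has_maximal_iff_noetherian.mpr inferInstance
    (J '' {F | ↑F ⊆ S}) ⟨J ∅, ∅, by simp, rfl⟩
  replace hFS : ↑F ⊆ S := hFS
  obtain ⟨t, htS, htF⟩ := Set.Infinite.exists_notMem_finset hS F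
  have hJ : J F = J (insert t F) :=
    eq_of_le_of_not_lt (sup_le_sup_left (Ideal.span_mono (image_mono (by simp))) _)
      (hmax _ ⟨insert t F, by simp [insert_subset_iff, htS, hFS], rfl⟩)
  have hat : a t ∈ J F := hJ ▸ Ideal.mem_sup_right (Ideal.subset_span ⟨t, by simp, rfl⟩)
  refine notMem_geIdeal_sup_span v hv hγ (fun s hs => ⟨ha s (hFS hs), (hFS hs).2.1⟩) ?_ ?_ hat
  · exact (ha t htS).symm ▸ htS.2.2
  · exact (ha t htS).symm ▸ htF

end CommRing

end AddValuation

theorem Set.finite_inter_Icc_of_forall_finite_inter_Ico {S : Set ℝ} {ε : ℝ} (hε : 0 < ε)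
    (h : ∀ c, (S ∩ Ico c (c + ε)).Finite) (a b : ℝ) : (S ∩ Icc a b).Finite := by
  have hIco : ∀ n : ℕ, (S ∩ Ico a (a + n * ε)).Finite := by
    intro n
    induction n with
    | zero => simp
    | succ n ih =>
      have hsplit : Ico a (a + (n + 1 : ℕ) * ε) =
          Ico a (a + n * ε) ∪ Ico (a + n * ε) (a + n * ε + ε) := by
        rw [Ico_union_Ico_eq_Ico (by nlinarith [n.cast_nonneg (α := ℝ)]) (by linarith)]
        push_cast; ring_nf
      rw [hsplit, inter_union_distrib_left]
      exact ih.union (h _)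
  obtain ⟨n, hn⟩ := exists_nat_gt ((b - a) / ε)
  refine (hIco n).subset (inter_subset_inter_right _ fun x hx => ⟨hx.1, ?_⟩)
  rw [div_lt_iff₀ hε] at hn
  linarith [hx.2]

theorem AddValuation.finite_coe_preimage_range_inter_Icc {R : Type*} [CommRing R]
    [IsNoetherianRing R] (v : AddValuation R (WithTop ℝ)) (hv : ∀ r, 0 ≤ v r) (a b : ℝ) :
    (((↑) : ℝ → WithTop ℝ) ⁻¹' range v ∩ Icc a b).Finite := by
  obtain ⟨γ, hγ0, hγ⟩ := v.exists_pos_le_of_pos hv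
  obtain ⟨ε, hε0, hεγ⟩ := exists_between hγ0
  lift ε to ℝ using hεγ.ne_top
  refine Set.finite_inter_Icc_of_forall_finite_inter_Ico (by exact_mod_cast hε0) (fun c => ?_) a b
  have := (v.finite_range_inter_Ico hv (fun r hr => hεγ.le.trans (hγ r hr)) c).preimage
    WithTop.coe_injective.injOn
  convert this using 1
  ext x
  simp [← WithTop.coe_add]

theorem statement5_general {A K : Type*} [CommRing A] [IsNoetherianRing A]
    [Field K] [Algebra A K]
    (v : K → WithTop ℝ)
    (hv0 : ∀ x : K, v x = ⊤ ↔ x = 0)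
    (hvmul : ∀ x y : K, v (x * y) = v x + v y)
    (hvadd : ∀ x y : K, min (v x) (v y) ≤ v (x + y))
    (hpos : ∀ a : A, a ≠ 0 → 0 ≤ v (algebraMap A K a)) :
    ∀ ρ : ℝ,
      {r : ℝ | (∃ a : A, a ≠ 0 ∧ v (algebraMap A K a) = (r : WithTop ℝ)) ∧
        0 ≤ r ∧ r ≤ ρ}.Finite := by
  intro ρ
  have hv1 : v 1 = 0 := by
    have h := hvmul 1 1
    rw [one_mul] at h
    lift v 1 to ℝ using (hv0 1).not.mpr one_ne_zero with r
    have : r = r + r := by exact_mod_cast h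
    simp [show r = 0 by linarith]
  let w : AddValuation A (WithTop ℝ) :=
    (AddValuation.of v ((hv0 0).mpr rfl) hv1 hvadd hvmul).comap (algebraMap A K)
  have hw : ∀ a, 0 ≤ w a := fun a => by
    rcases eq_or_ne a 0 with rfl | ha
    · simp
    · exact hpos a ha
  refine (w.finite_coe_preimage_range_inter_Icc hw 0 ρ).subset ?_
  rintro r ⟨⟨a, -, ha⟩, hr⟩
  exact ⟨⟨a, ha⟩, hr⟩

/-- Let `A` be a Noetherian integral domain with fraction field `K`, and
let `v` be an additive real-valued valuation on `K` which is nonnegative on the nonzero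
elements of `A`.  Then the value semigroup `Γ = {v a : a ∈ A, a ≠ 0} ⊆ [0,∞)` is
discrete: for every `ρ : ℝ` the set `Γ ∩ [0, ρ]` is finite. -/
theorem statement5 {A K : Type*} [CommRing A] [IsDomain A] [IsNoetherianRing A]
    [Field K] [Algebra A K] [IsFractionRing A K]
    (v : K → WithTop ℝ)
    (hv0 : ∀ x : K, v x = ⊤ ↔ x = 0)
    (hvmul : ∀ x y : K, v (x * y) = v x + v y)
    (hvadd : ∀ x y : K, min (v x) (v y) ≤ v (x + y))
    (hpos : ∀ a : A, a ≠ 0 → 0 ≤ v (algebraMap A K a)) :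
    ∀ ρ : ℝ,
      {r : ℝ | (∃ a : A, a ≠ 0 ∧ v (algebraMap A K a) = (r : WithTop ℝ)) ∧
        0 ≤ r ∧ r ≤ ρ}.Finite :=
  statement5_general v hv0 hvmul hvadd hpos
end

section
/- Let K be a field with an additive real-valued valuation v, let R ⊆ K be a Noetherian subring such that v(r) ≥ 0 for every nonzero r ∈ R, and let M ⊆ K be a finitely generated R-submodule of K. Then the set {v(m) : m ∈ M, m ≠ 0} is a discrete subset of ℝ; more precisely, for every real number ρ the set {v(m) : m ∈ M, m ≠ 0} ∩ (−∞, ρ] is finite. -/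
/-!
If `M` is spanned by `g₁, …, gₖ`, every element of `M` has valuation at least `min v(gᵢ)`, so the
values in question lie in a bounded interval and it suffices to see that every window `[t, t + δ)`
contains only finitely many of them. Here `δ > 0` is a lower bound for the positive values of `v`
on `R`, which exists because the ideal `{r | v r > 0}` is finitely generated.

In a window of length `δ`, a combination `∑ rᵢ • xᵢ` of elements with pairwise distinct values
`≥ t` either has valuation `≥ t + δ` or has the value of some `xᵢ`: terms with `v rᵢ > 0` are pushed
out of the window, and among the others the minimal value is attained only once. So an element of
`M` with a new value in the window never lies in `M_{≥ t + δ} + span R {x₁, …, xₙ}`, and infinitely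
many such values would contradict the existence of maximal submodules of the Noetherian module `M`.
-/
open Submodule Set

namespace Set.Finite

theorem of_bdd_of_finite_inter_Ico {α : Type*} [Field α] [LinearOrder α] [IsStrictOrderedRing α]
    [Archimedean α] {S : Set α} {δ : α} (hδ : 0 < δ) (hbelow : BddBelow S) (habove : BddAbove S)
    (h : ∀ t, (S ∩ Ico t (t + δ)).Finite) : S.Finite := by
  obtain ⟨c, hc⟩ := hbelow
  obtain ⟨ρ, hρ⟩ := habove
  have hcover : ∀ n : ℕ, (S ∩ Ico c (c + n * δ)).Finite := by
    intro n
    induction n with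
    | zero => simp
    | succ n ih =>
      refine (ih.union (h (c + n * δ))).subset ?_
      rintro r ⟨hrS, hcr, hr⟩
      push_cast at hr
      by_cases hrn : r < c + n * δ
      · exact .inl ⟨hrS, hcr, hrn⟩
      · exact .inr ⟨hrS, not_lt.1 hrn, by linarith⟩
  obtain ⟨n, hn⟩ := exists_nat_gt ((ρ - c) / δ)
  refine (hcover n).subset fun r hr => ⟨hr, hc hr, ?_⟩
  have hrρ := hρ hr
  have hρn := (div_lt_iff₀ hδ).1 hn
  linarith

end Set.Finite

namespace AddValuation

variable {R A : Type*} [CommRing R] [Ring A] [Algebra R A] (v : AddValuation A (WithTop ℝ))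
  (hv : ∀ r : R, 0 ≤ v (algebraMap R A r))

include hv in
lemma le_map_smul (r : R) (x : A) : v x ≤ v (r • x) := by
  rw [Algebra.smul_def, v.map_mul]
  exact le_add_of_nonneg_left (hv r)

def geSubmodule (t : ℝ) : Submodule R A where
  carrier := {x | ↑t ≤ v x}
  add_mem' hx hy := v.map_le_add hx hy
  zero_mem' := by simp
  smul_mem' r _ hx := hx.trans (v.le_map_smul hv r _)

def gtSubmodule (t : ℝ) : Submodule R A where
  carrier := {x | ↑t < v x}
  add_mem' hx hy := v.map_lt_add hx hy
  zero_mem' := by simp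
  smul_mem' r _ hx := hx.trans_le (v.le_map_smul hv r _)

include hv in
lemma inf_le_of_mem_span {s : Finset A} {x : A} (hx : x ∈ span R (s : Set A)) : s.inf v ≤ v x := by
  induction hx using Submodule.span_induction with
  | mem y hy => exact Finset.inf_le hy
  | zero => simp
  | add y z _ _ hy hz => exact v.map_le_add hy hz
  | smul r y _ hy => exact hy.trans (v.le_map_smul hv r y)

include hv in
lemma exists_forall_le_of_fg {N : Submodule R A} (hN : N.FG) :
    ∃ c : ℝ, ∀ x ∈ N, ↑c ≤ v x := by
  obtain ⟨s, rfl⟩ := hN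
  obtain ⟨c, hc⟩ : ∃ c : ℝ, ↑c ≤ s.inf v := by
    induction s.inf v using WithTop.recTopCoe with
    | top => exact ⟨0, le_top⟩
    | coe a => exact ⟨a, le_rfl⟩
  exact ⟨c, fun x hx => hc.trans (v.inf_le_of_mem_span hv hx)⟩

include hv in
lemma exists_lt_forall_le_of_fg {N : Submodule R A} (hN : N.FG) {a : WithTop ℝ}
    (ha : ∀ x ∈ N, a < v x) : ∃ b, a < b ∧ ∀ x ∈ N, b ≤ v x := by
  obtain ⟨s, rfl⟩ := hN
  have ha_top : a < ⊤ := by simpa using ha 0 (zero_mem _)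
  exact ⟨s.inf v, (Finset.lt_inf_iff ha_top).2 fun x hx => ha x (subset_span hx),
    fun x hx => v.inf_le_of_mem_span hv hx⟩

lemma exists_pos_forall_le_of_pos [IsNoetherianRing R] (w : AddValuation R (WithTop ℝ))
    (hw : ∀ r, 0 ≤ w r) : ∃ δ : ℝ, 0 < δ ∧ ∀ r, 0 < w r → ↑δ ≤ w r := by
  obtain ⟨b, hb0, hb⟩ := w.exists_lt_forall_le_of_fg hw
    (IsNoetherian.noetherian (w.gtSubmodule hw 0)) fun _ hx => hx
  obtain ⟨e, he0, heb⟩ := exists_between hb0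
  lift e to ℝ using heb.ne_top
  exact ⟨e, mod_cast he0, fun r hr => heb.le.trans (hb r hr)⟩

section Window

variable {δ : ℝ} (hδ : ∀ r : R, 0 < v (algebraMap R A r) → ↑δ ≤ v (algebraMap R A r))

include hv hδ in
lemma map_smul_eq_of_lt {t : ℝ} {r : R} {a : A} (ha : ↑t ≤ v a) (hlt : v (r • a) < ↑(t + δ)) :
    v (r • a) = v a := by
  rw [Algebra.smul_def, v.map_mul] at hlt ⊢
  suffices v (algebraMap R A r) = 0 by rw [this, zero_add]
  refine le_antisymm (not_lt.1 fun hpos => hlt.not_ge ?_) (hv r)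
  calc ((t + δ : ℝ) : WithTop ℝ) = δ + t := by rw [add_comm]; rfl
    _ ≤ _ := add_le_add (hδ r hpos) ha

include hv hδ in
lemma map_mem_image_or_le_of_mem_sup_span {t : ℝ} {T : Finset A} (hT : ∀ a ∈ T, ↑t ≤ v a)
    (hinj : Set.InjOn v T) {y : A} (hy : y ∈ v.geSubmodule hv (t + δ) ⊔ span R (T : Set A)) :
    v y ∈ v '' T ∨ ↑(t + δ) ≤ v y := by
  classical
  obtain ⟨w, hw, z, hz, rfl⟩ := mem_sup.1 hy
  obtain ⟨f, -, rfl⟩ := mem_span_finset.1 hz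
  by_cases hle : ↑(t + δ) ≤ v (∑ a ∈ T, f a • a)
  · exact .inr (v.map_le_add hw hle)
  rw [not_le] at hle
  rw [v.map_add_eq_of_lt_right (hle.trans_le hw)]
  left
  have hT_ne : T.Nonempty := by
    by_contra! h
    simp [h] at hle
  obtain ⟨a₀, ha₀, hmin⟩ := T.exists_min_image (fun a => v (f a • a)) hT_ne
  have ha₀_lt : v (f a₀ • a₀) < ↑(t + δ) := (v.map_le_sum hmin).trans_lt hle
  have ha₀_eq := v.map_smul_eq_of_lt hv hδ (hT a₀ ha₀) ha₀_lt
  have hstrict : ∀ a ∈ T.erase a₀, v (f a₀ • a₀) < v (f a • a) := by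
    intro a ha
    obtain ⟨hne, haT⟩ := Finset.mem_erase.1 ha
    refine (hmin a haT).lt_of_ne fun heq => hne (hinj haT ha₀ ?_)
    rw [← v.map_smul_eq_of_lt hv hδ (hT a haT) (heq ▸ ha₀_lt), ← heq, ha₀_eq]
  have hrest := v.map_lt_sum (ha₀_lt.trans (WithTop.coe_lt_top _)).ne hstrict
  rw [← Finset.add_sum_erase T _ ha₀, v.map_add_eq_of_lt_left hrest, ha₀_eq]
  exact ⟨a₀, ha₀, rfl⟩

include hv hδ in
lemma notMem_sup_span_image [DecidableEq A] {t : ℝ} {x : ℝ → A} {F : Finset ℝ}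
    (hF : ∀ r ∈ F, t ≤ r ∧ v (x r) = r) {r : ℝ} (hr : r < t + δ) (hxr : v (x r) = r)
    (hrF : r ∉ F) : x r ∉ v.geSubmodule hv (t + δ) ⊔ span R ↑(F.image x) := by
  intro hmem
  have hT : ∀ a ∈ F.image x, ↑t ≤ v a := by
    simp only [Finset.mem_image]
    rintro _ ⟨r', hr', rfl⟩
    exact (hF r' hr').2 ▸ mod_cast (hF r' hr').1
  have hinj : Set.InjOn v ↑(F.image x) := by
    rintro _ ha _ hb hab
    obtain ⟨r₁, h₁, rfl⟩ := Finset.mem_image.1 ha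
    obtain ⟨r₂, h₂, rfl⟩ := Finset.mem_image.1 hb
    rw [(hF r₁ h₁).2, (hF r₂ h₂).2, WithTop.coe_inj] at hab
    rw [hab]
  rcases v.map_mem_image_or_le_of_mem_sup_span hv hδ hT hinj hmem with ⟨a, ha, hva⟩ | hge
  · obtain ⟨r', hr', rfl⟩ := Finset.mem_image.1 ha
    rw [(hF r' hr').2, hxr, WithTop.coe_inj] at hva
    exact hrF (hva ▸ hr')
  · rw [hxr, WithTop.coe_le_coe] at hge
    exact hr.not_ge hge

include hv hδ in
lemma finite_map_inter_Ico [IsNoetherianRing R] {M : Submodule R A} (hM : M.FG) (t : ℝ) :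
    ({r : ℝ | ∃ m ∈ M, v m = r} ∩ Ico t (t + δ)).Finite := by
  classical
  set S := {r : ℝ | ∃ m ∈ M, v m = r} ∩ Ico t (t + δ)
  by_contra hS
  choose! x hxM hxv using fun r (hr : r ∈ S) => hr.1
  have : IsNoetherian R M := isNoetherian_of_fg_of_noetherian M hM
  let N : Finset ℝ → Submodule R M := fun F =>
    (v.geSubmodule hv (t + δ) ⊔ span R ↑(F.image x)).comap M.subtype
  obtain ⟨_, ⟨F, hFS, rfl⟩, hmax⟩ := set_has_maximal_iff_noetherian.2 this
    (N '' {F | ↑F ⊆ S}) ⟨_, ⟨∅, by simp, rfl⟩⟩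
  obtain ⟨r, hrS, hrF⟩ := Set.Infinite.exists_notMem_finset hS F
  refine hmax (N (insert r F)) ⟨insert r F, by simpa [insert_subset_iff] using ⟨hrS, hFS⟩, rfl⟩
    (lt_of_le_not_ge (comap_mono (sup_le_sup_left (span_mono ?_) _)) fun hle => ?_)
  · simp only [Finset.coe_image, Finset.coe_insert]
    exact image_mono (subset_insert _ _)
  exact v.notMem_sup_span_image hv hδ (fun r' hr' => ⟨(hFS hr').2.1, hxv r' (hFS hr')⟩)
    hrS.2.2 (hxv r hrS) hrF
    (hle (show (⟨x r, hxM r hrS⟩ : M) ∈ N (insert r F) from mem_sup_right (subset_span (by simp))))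

end Window

include hv in
theorem finite_map_inter_Iic [IsNoetherianRing R] {M : Submodule R A} (hM : M.FG) (ρ : ℝ) :
    ({r : ℝ | ∃ m ∈ M, v m = r} ∩ Iic ρ).Finite := by
  obtain ⟨c, hc⟩ := v.exists_forall_le_of_fg hv hM
  obtain ⟨δ, hδ0, hδ⟩ := (v.comap (algebraMap R A)).exists_pos_forall_le_of_pos hv
  refine .of_bdd_of_finite_inter_Ico hδ0 ⟨c, ?_⟩ ⟨ρ, fun r hr => hr.2⟩ fun t =>
    (v.finite_map_inter_Ico hv hδ hM t).subset (inter_subset_inter_left _ inter_subset_left)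
  rintro r ⟨⟨m, hm, hmr⟩, -⟩
  exact WithTop.coe_le_coe.1 (hmr ▸ hc m hm)

end AddValuation

/-- Let `K` be a field with an additive real-valued valuation `v`, let
`R ⊆ K` be a Noetherian subring on whose nonzero elements `v` is nonnegative, and let
`M ⊆ K` be a finitely generated `R`-submodule of `K`.  Then `{v m : m ∈ M, m ≠ 0}` is a
discrete subset of `ℝ`: for every `ρ : ℝ` the set `{v m : m ∈ M, m ≠ 0} ∩ (−∞, ρ]` is
finite. -/
theorem statement6 {K : Type*} [Field K]
    (v : K → WithTop ℝ)
    (hv0 : ∀ x : K, v x = ⊤ ↔ x = 0)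
    (hvmul : ∀ x y : K, v (x * y) = v x + v y)
    (hvadd : ∀ x y : K, min (v x) (v y) ≤ v (x + y))
    (R : Subring K) (hR : IsNoetherianRing R)
    (hpos : ∀ r ∈ R, r ≠ 0 → 0 ≤ v r)
    (M : Submodule R K) (hM : M.FG) :
    ∀ ρ : ℝ,
      {r : ℝ | (∃ m ∈ M, m ≠ 0 ∧ v m = (r : WithTop ℝ)) ∧ r ≤ ρ}.Finite := by
  intro ρ
  have hv1 : v 1 = 0 := by
    have h := hvmul 1 1
    rw [one_mul] at h
    lift v 1 to ℝ using (hv0 1).not.2 one_ne_zero with a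
    norm_cast at h ⊢
    linarith
  let w : AddValuation K (WithTop ℝ) := .of v ((hv0 0).2 rfl) hv1 hvadd hvmul
  have hw : ∀ r : R, 0 ≤ w (algebraMap R K r) := fun r => by
    change 0 ≤ v r
    rcases eq_or_ne (r : K) 0 with hr | hr
    · rw [hr, (hv0 0).2 rfl]
      exact le_top
    · exact hpos r r.2 hr
  have := hR
  refine (w.finite_map_inter_Iic hw hM ρ).subset ?_
  rintro r ⟨⟨m, hm, -, hmr⟩, hr⟩
  exact ⟨⟨m, hm, hmr⟩, hr⟩
end

section
/- Let K be a field with an additive real-valued valuation v, let K̄ be an algebraic closure of K, and let w be an additive real-valued valuation on K̄ extending v (i.e., w restricted to the image of K equals v). Let P = Σ_{i=0}^d a_i X^i ∈ K[X] with d ≥ 1 and a_d ≠ 0, and define its complete valuation polygon NP(P) : ℝ → ℝ by NP(P)(t) = min{ v(a_i) + i·t : 0 ≤ i ≤ d, a_i ≠ 0 }. Suppose there are r ∈ ℝ, ε > 0 and real constants s₋, s₊, β₋, β₊ with s₋ > s₊, such that NP(P)(t) = s₋·t + β₋ for all t ∈ [r − ε, r] and NP(P)(t) = s₊·t + β₊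 for all t ∈ [r, r + ε]. Then the number of roots α of P in K̄, counted with multiplicity, satisfying w(α) = r equals s₋ − s₊. -/
/-!
Over `L`, `P = c ∏ (X - α)`, so the coefficient of `X ^ (n - k)` is `± c · e_k(α)`. The
ultrametric inequality gives `w (e_k) ≥ min_{#T = k} ∑_{α ∈ T} w α`, hence
`w (aᵢ) + i t ≥ w c + ∑_α min (w α) t` for every `i`. For `k = #{α | w α < t}` the set
`{α | w α < t}` is the unique minimiser, so equality holds there. Thus
`NP(P)(t) = w c + ∑_α min (w α) t`, whose slope just left of `r` is `#{α | r ≤ w α}` and just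
right of `r` is `#{α | r < w α}`; the difference counts the roots with `w α = r`.
-/

open scoped Classical

open Finset Filter Topology

namespace AddValuation

variable {R : Type*} [CommRing R] (w : AddValuation R (WithTop ℝ))

theorem map_finsetProd {ι : Type*} (f : ι → R) (s : Finset ι) :
    w (∏ i ∈ s, f i) = ∑ i ∈ s, w (f i) := by
  induction s using Finset.induction_on with
  | empty => simp [map_one]
  | insert j s hj ih => rw [prod_insert hj, sum_insert hj, map_mul, ih]

variable {ι : Type*} [Fintype ι] (f : ι → R) (t : ℝ)

theorem sum_min_le_sum_add (T : Finset ι) :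
    ∑ i, min (w (f i)) t ≤ ∑ i ∈ T, w (f i) + (Fintype.card ι - #T) • (t : WithTop ℝ) := by
  rw [← sum_add_sum_compl T, ← card_compl]
  gcongr
  · exact min_le_left _ _
  · exact sum_le_card_nsmul _ _ _ fun i _ => min_le_right _ _

theorem sum_min_le_map_esymm_add (k : ℕ) :
    ∑ i, min (w (f i)) t ≤
      w ((univ.val.map f).esymm k) + (Fintype.card ι - k) • (t : WithTop ℝ) := by
  rw [esymm_map_val]
  obtain hempty | ⟨T₀, hT₀, hmin⟩ :=
    (univ.powersetCard k).eq_empty_or_nonempty.imp id (exists_min_image _ (fun T => w (T.prod f)))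
  · simp [hempty]
  calc ∑ i, min (w (f i)) t
      ≤ ∑ i ∈ T₀, w (f i) + (Fintype.card ι - #T₀) • (t : WithTop ℝ) := sum_min_le_sum_add w f t T₀
    _ = w (T₀.prod f) + (Fintype.card ι - k) • (t : WithTop ℝ) := by
      rw [map_finsetProd, (mem_powersetCard.1 hT₀).2]
    _ ≤ _ := by gcongr; exact map_le_sum w hmin

theorem sum_min_eq_sum_filter_lt_add :
    ∑ i, min (w (f i)) t = ∑ i with w (f i) < t, w (f i) +
      (Fintype.card ι - #{i | w (f i) < t}) • (t : WithTop ℝ) := by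
  rw [← sum_filter_add_sum_filter_not univ (fun i => w (f i) < t), ← card_compl,
    compl_eq_univ_sdiff, ← filter_not]
  congr 1
  · exact sum_congr rfl fun i hi => min_eq_left (mem_filter.1 hi).2.le
  · rw [← sum_const]
    exact sum_congr rfl fun i hi => min_eq_right (not_lt.1 (mem_filter.1 hi).2)

theorem sum_filter_lt_lt_sum {T : Finset ι} (hcard : #T = #{i | w (f i) < t})
    (hne : T ≠ ({i | w (f i) < t} : Finset ι)) :
    ∑ i with w (f i) < t, w (f i) < ∑ i ∈ T, w (f i) := by
  set A : Finset ι := {i | w (f i) < t}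
  obtain ⟨j, hjA, hjT⟩ := not_subset.1 fun h => hne (eq_of_subset_of_card_le h hcard.le).symm
  have hmin_ne_top : ∀ s : Finset ι, ∑ i ∈ s, min (w (f i)) t ≠ ⊤ := fun s =>
    WithTop.sum_ne_top.2 fun i _ => ((min_le_right _ _).trans_lt (WithTop.coe_lt_top t)).ne
  have hcompl : ∑ i ∈ Tᶜ, min (w (f i)) t < #Tᶜ • (t : WithTop ℝ) := by
    have hj : j ∈ Tᶜ := mem_compl.2 hjT
    rw [← add_sum_erase _ _ hj, ← card_erase_add_one hj, succ_nsmul']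
    refine WithTop.add_lt_add_of_lt_of_le (hmin_ne_top _) ?_ ?_
    · exact (min_le_left _ _).trans_lt (mem_filter.1 hjA).2
    · exact sum_le_card_nsmul _ _ _ fun i _ => min_le_right _ _
  have key :
      ∑ i ∈ A, w (f i) + #Tᶜ • (t : WithTop ℝ) < ∑ i ∈ T, w (f i) + #Tᶜ • (t : WithTop ℝ) :=
    calc ∑ i ∈ A, w (f i) + #Tᶜ • (t : WithTop ℝ) = ∑ i, min (w (f i)) t := by
          rw [sum_min_eq_sum_filter_lt_add, card_compl, hcard]
      _ = ∑ i ∈ T, min (w (f i)) t + ∑ i ∈ Tᶜ, min (w (f i)) t := (sum_add_sum_compl T _).symm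
      _ < ∑ i ∈ T, w (f i) + #Tᶜ • (t : WithTop ℝ) := by
          refine WithTop.add_lt_add_of_le_of_lt (hmin_ne_top _) ?_ hcompl
          exact sum_le_sum fun i _ => min_le_left _ _
  rwa [WithTop.add_lt_add_iff_right] at key
  rw [← WithTop.coe_nsmul]
  exact WithTop.coe_ne_top

theorem map_esymm_card_filter_lt_add :
    w ((univ.val.map f).esymm #{i | w (f i) < t}) +
      (Fintype.card ι - #{i | w (f i) < t}) • (t : WithTop ℝ) = ∑ i, min (w (f i)) t := by
  set A : Finset ι := {i | w (f i) < t}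
  have hA : A ∈ univ.powersetCard #A := mem_powersetCard.2 ⟨subset_univ A, rfl⟩
  have hA_ne_top : w (A.prod f) ≠ ⊤ := by
    rw [map_finsetProd]
    exact WithTop.sum_ne_top.2 fun i hi => (mem_filter.1 hi).2.ne_top
  rw [sum_min_eq_sum_filter_lt_add, esymm_map_val, ← add_sum_erase _ _ hA,
    map_add_eq_of_lt_left, map_finsetProd]
  refine map_lt_sum w hA_ne_top fun T hT => ?_
  obtain ⟨hTA, hT⟩ := mem_erase.1 hT
  rw [map_finsetProd, map_finsetProd]
  exact sum_filter_lt_lt_sum w f t (mem_powersetCard.1 hT).2 hTA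

end AddValuation

namespace Polynomial

variable {L : Type*} [Field L] (w : AddValuation L (WithTop ℝ))

theorem isLeast_valuation_coeff_add {Q : L[X]} (hQ : Q ≠ 0) (hroots : Q.roots.card = Q.natDegree)
    (t : ℝ) :
    IsLeast {x | ∃ i : ℕ, Q.coeff i ≠ 0 ∧ x = w (Q.coeff i) + ((i * t : ℝ) : WithTop ℝ)}
      (w Q.leadingCoeff + ∑ α : Q.roots, min (w α) t) := by
  set n := Q.natDegree
  have hcard : Fintype.card Q.roots = n := by rw [Multiset.card_coe, hroots]
  have hesymm : ∀ k, (univ.val.map fun α : Q.roots => (α : L)).esymm k = Q.roots.esymm k := by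
    simp
  have hcoeff : ∀ i ≤ n, w (Q.coeff i) = w Q.leadingCoeff + w (Q.roots.esymm (n - i)) := by
    intro i hi
    rw [coeff_eq_esymm_roots_of_card hroots hi, AddValuation.map_mul, AddValuation.map_mul,
      AddValuation.map_pow, AddValuation.map_neg, AddValuation.map_one, nsmul_zero, add_zero]
  have hterm : ∀ i ≤ n, ((i * t : ℝ) : WithTop ℝ) = (n - (n - i)) • (t : WithTop ℝ) := by
    intro i hi
    rw [Nat.sub_sub_self hi, ← WithTop.coe_nsmul, nsmul_eq_mul]
  refine ⟨?_, ?_⟩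
  · set k := #{α : Q.roots | w α < t}
    have hk : k ≤ n := hcard ▸ card_le_univ _
    have hvalue : w (Q.coeff (n - k)) + (((n - k : ℕ) * t : ℝ) : WithTop ℝ) =
        w Q.leadingCoeff + ∑ α : Q.roots, min (w α) t := by
      have heq := AddValuation.map_esymm_card_filter_lt_add w (fun α : Q.roots => (α : L)) t
      rw [hesymm, hcard] at heq
      rw [hcoeff _ (Nat.sub_le n k), hterm _ (Nat.sub_le n k), Nat.sub_sub_self hk, add_assoc, heq]
    refine ⟨n - k, fun h0 => ?_, hvalue.symm⟩
    have hlead : w Q.leadingCoeff ≠ ⊤ := (AddValuation.ne_top_iff w).2 (leadingCoeff_ne_zero.2 hQ)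
    have hsum : ∑ α : Q.roots, min (w α) t ≠ ⊤ :=
      WithTop.sum_ne_top.2 fun α _ => ((min_le_right _ _).trans_lt (WithTop.coe_lt_top t)).ne
    rw [h0, AddValuation.map_zero, top_add] at hvalue
    exact WithTop.add_ne_top.2 ⟨hlead, hsum⟩ hvalue.symm
  · rintro _ ⟨i, hi, rfl⟩
    have hin : i ≤ n := le_natDegree_of_ne_zero hi
    rw [hcoeff i hin, hterm i hin, add_assoc]
    gcongr
    have := AddValuation.sum_min_le_map_esymm_add w (fun α : Q.roots => (α : L)) t (n - i)
    rwa [hesymm, hcard] at this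

end Polynomial

section SumMin

variable {ι : Type*} [Fintype ι] (g : ι → WithTop ℝ) (r : ℝ)

theorem WithTop.eventually_min_nhdsLT (x : WithTop ℝ) :
    ∀ᶠ t : ℝ in 𝓝[<] r,
      min x r = min x t + if (r : WithTop ℝ) ≤ x then ((r - t : ℝ) : WithTop ℝ) else 0 := by
  by_cases hx : (r : WithTop ℝ) ≤ x
  · filter_upwards [self_mem_nhdsWithin] with t (ht : t < r)
    rw [if_pos hx, min_eq_right hx, min_eq_right ((WithTop.coe_le_coe.2 ht.le).trans hx),
      ← WithTop.coe_add, add_sub_cancel]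
  · lift x to ℝ using (not_le.1 hx).ne_top
    have hxr : x < r := WithTop.coe_lt_coe.1 (not_le.1 hx)
    filter_upwards [Ioo_mem_nhdsLT hxr] with t ht
    rw [if_neg hx, add_zero, min_eq_left (WithTop.coe_le_coe.2 hxr.le),
      min_eq_left (WithTop.coe_le_coe.2 ht.1.le)]

theorem WithTop.eventually_min_nhdsGT (x : WithTop ℝ) :
    ∀ᶠ t : ℝ in 𝓝[>] r,
      min x t = min x r + if (r : WithTop ℝ) < x then ((t - r : ℝ) : WithTop ℝ) else 0 := by
  induction x using WithTop.recTopCoe with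
  | top =>
    refine Eventually.of_forall fun t => ?_
    rw [if_pos (WithTop.coe_lt_top r), min_eq_right le_top, min_eq_right le_top,
      ← WithTop.coe_add, add_sub_cancel]
  | coe y =>
    by_cases hy : r < y
    · filter_upwards [Ioo_mem_nhdsGT hy] with t ht
      rw [if_pos (WithTop.coe_lt_coe.2 hy), min_eq_right (WithTop.coe_le_coe.2 ht.2.le),
        min_eq_right (WithTop.coe_le_coe.2 hy.le), ← WithTop.coe_add, add_sub_cancel]
    · filter_upwards [self_mem_nhdsWithin] with t (ht : r < t)
      rw [if_neg (fun h => hy (WithTop.coe_lt_coe.1 h)), add_zero,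
        min_eq_left (WithTop.coe_le_coe.2 (not_lt.1 hy)),
        min_eq_left (WithTop.coe_le_coe.2 ((not_lt.1 hy).trans ht.le))]

theorem eventually_sum_min_nhdsLT :
    ∀ᶠ t : ℝ in 𝓝[<] r, ∑ i, min (g i) r =
      ∑ i, min (g i) t + ((#{i | (r : WithTop ℝ) ≤ g i} * (r - t) : ℝ) : WithTop ℝ) := by
  filter_upwards [eventually_all.2 fun i => WithTop.eventually_min_nhdsLT r (g i)] with t ht
  rw [sum_congr rfl fun i _ => ht i, sum_add_distrib, sum_ite, sum_const_zero, add_zero, sum_const,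
    ← WithTop.coe_nsmul, nsmul_eq_mul]

theorem eventually_sum_min_nhdsGT :
    ∀ᶠ t : ℝ in 𝓝[>] r, ∑ i, min (g i) t =
      ∑ i, min (g i) r + ((#{i | (r : WithTop ℝ) < g i} * (t - r) : ℝ) : WithTop ℝ) := by
  filter_upwards [eventually_all.2 fun i => WithTop.eventually_min_nhdsGT r (g i)] with t ht
  rw [sum_congr rfl fun i _ => ht i, sum_add_distrib, sum_ite, sum_const_zero, add_zero, sum_const,
    ← WithTop.coe_nsmul, nsmul_eq_mul]

theorem slope_eq_card_le_of_sum_min_eq {ε a b : ℝ} (hε : 0 < ε)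
    (h : ∀ t ∈ Set.Icc (r - ε) r, ∑ i, min (g i) t = ((a * t + b : ℝ) : WithTop ℝ)) :
    a = #{i | (r : WithTop ℝ) ≤ g i} := by
  obtain ⟨t, hrel, ht⟩ :=
    ((eventually_sum_min_nhdsLT g r).and (Ioo_mem_nhdsLT (by linarith : r - ε < r))).exists
  rw [h r ⟨by linarith, le_rfl⟩, h t ⟨ht.1.le, ht.2.le⟩, ← WithTop.coe_add,
    WithTop.coe_inj] at hrel
  have hprod : (a - #{i | (r : WithTop ℝ) ≤ g i}) * (r - t) = 0 := by linear_combination hrel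
  exact sub_eq_zero.1 ((mul_eq_zero.1 hprod).resolve_right (sub_ne_zero.2 ht.2.ne'))

theorem slope_eq_card_lt_of_sum_min_eq {ε a b : ℝ} (hε : 0 < ε)
    (h : ∀ t ∈ Set.Icc r (r + ε), ∑ i, min (g i) t = ((a * t + b : ℝ) : WithTop ℝ)) :
    a = #{i | (r : WithTop ℝ) < g i} := by
  obtain ⟨t, hrel, ht⟩ :=
    ((eventually_sum_min_nhdsGT g r).and (Ioo_mem_nhdsGT (by linarith : r < r + ε))).exists
  rw [h r ⟨le_rfl, by linarith⟩, h t ⟨ht.1.le, ht.2.le⟩, ← WithTop.coe_add,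
    WithTop.coe_inj] at hrel
  have hprod : (a - #{i | (r : WithTop ℝ) < g i}) * (t - r) = 0 := by linear_combination hrel
  exact sub_eq_zero.1 ((mul_eq_zero.1 hprod).resolve_right (sub_ne_zero.2 ht.1.ne'))

theorem card_filter_le_eq_card_filter_eq_add :
    #{i | (r : WithTop ℝ) ≤ g i} = #{i | g i = r} + #{i | (r : WithTop ℝ) < g i} := by
  rw [← card_union_of_disjoint (disjoint_filter.2 fun i _ h1 h2 => h2.ne' h1), ← filter_or]
  congr 1
  ext i
  simp [le_iff_eq_or_lt, eq_comm]

end SumMin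

theorem WithTop.eq_zero_of_add_self_eq {x : WithTop ℝ} (hx : x ≠ ⊤) (h : x + x = x) : x = 0 := by
  lift x to ℝ using hx
  rw [← WithTop.coe_add, WithTop.coe_inj] at h
  rw [WithTop.coe_eq_zero]
  linarith

theorem Multiset.card_filter_eq_card_filter_univ {α : Type*} (s : Multiset α) (p : α → Prop)
    [DecidablePred p] :
    (s.filter p).card = #{x : s | p x} := by
  conv_lhs => rw [← Multiset.map_univ_coe s]
  rw [Multiset.filter_map, Multiset.card_map]
  rfl

theorem statement7_general {K L : Type*} [Field K] [Field L] [Algebra K L] [IsAlgClosure K L]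
    (v : K → WithTop ℝ)
    (w : L → WithTop ℝ)
    (hw0 : ∀ x : L, w x = ⊤ ↔ x = 0)
    (hwmul : ∀ x y : L, w (x * y) = w x + w y)
    (hwadd : ∀ x y : L, min (w x) (w y) ≤ w (x + y))
    (hext : ∀ x : K, w (algebraMap K L x) = v x)
    (P : Polynomial K) {d : ℕ}
    (hlead : P.coeff d ≠ 0)
    (r ε sm sp bm bp : ℝ) (hε : 0 < ε)
    (hNPm : ∀ t ∈ Set.Icc (r - ε) r,
      IsLeast {x : WithTop ℝ | ∃ i : ℕ, P.coeff i ≠ 0 ∧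
          x = v (P.coeff i) + (((i : ℝ) * t : ℝ) : WithTop ℝ)}
        ((sm * t + bm : ℝ) : WithTop ℝ))
    (hNPp : ∀ t ∈ Set.Icc r (r + ε),
      IsLeast {x : WithTop ℝ | ∃ i : ℕ, P.coeff i ≠ 0 ∧
          x = v (P.coeff i) + (((i : ℝ) * t : ℝ) : WithTop ℝ)}
        ((sp * t + bp : ℝ) : WithTop ℝ)) :
    ((((P.map (algebraMap K L)).roots.filter
        (fun α => w α = ((r : ℝ) : WithTop ℝ))).card : ℝ)) = sm - sp := by
  obtain ⟨w, rfl⟩ : ∃ w' : AddValuation L (WithTop ℝ), ⇑w' = w :=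
    ⟨.of w ((hw0 0).2 rfl) (WithTop.eq_zero_of_add_self_eq ((hw0 1).not.2 one_ne_zero)
      (by rw [← hwmul, one_mul])) hwadd hwmul, rfl⟩
  have := IsAlgClosure.isAlgClosed K (K := L)
  set Q := P.map (algebraMap K L)
  have hQ : Q ≠ 0 := Polynomial.map_ne_zero fun h => hlead (by rw [h, Polynomial.coeff_zero])
  obtain ⟨c, hc⟩ := WithTop.ne_top_iff_exists.1
    ((AddValuation.ne_top_iff w).2 (Polynomial.leadingCoeff_ne_zero.2 hQ))
  have hpolygon : ∀ t a b : ℝ, IsLeast {x : WithTop ℝ | ∃ i : ℕ, P.coeff i ≠ 0 ∧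
      x = v (P.coeff i) + (((i : ℝ) * t : ℝ) : WithTop ℝ)} ((a * t + b : ℝ) : WithTop ℝ) →
      ∑ α : Q.roots, min (w α) t = ((a * t + (b - c) : ℝ) : WithTop ℝ) := by
    intro t a b h
    have hQt := Polynomial.isLeast_valuation_coeff_add w hQ IsAlgClosed.card_roots_eq_natDegree t
    simp only [Q, Polynomial.coeff_map, map_ne_zero, hext] at hQt
    obtain ⟨c', F, hc', hF, hsum⟩ := WithTop.add_eq_coe.1 (hQt.unique h)
    rw [← hF, WithTop.coe_inj]
    rw [← hc, WithTop.coe_inj] at hc'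
    linarith
  rw [Multiset.card_filter_eq_card_filter_univ,
    slope_eq_card_le_of_sum_min_eq _ r hε fun t ht => hpolygon t sm bm (hNPm t ht),
    slope_eq_card_lt_of_sum_min_eq _ r hε fun t ht => hpolygon t sp bp (hNPp t ht),
    card_filter_le_eq_card_filter_eq_add]
  push_cast
  ring

/-- Let `K` be a field with an additive real-valued valuation `v`, let
`L` be an algebraic closure of `K` and `w` an additive real-valued valuation on `L`
extending `v`.  Let `P ∈ K[X]` have degree `d ≥ 1`, and suppose the complete valuation
polygon `NP(P)(t) = min{v(aᵢ) + i·t : aᵢ ≠ 0}` is given by the affine function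
`sm·t + bm` on `[r − ε, r]` and by `sp·t + bp` on `[r, r + ε]`, with `sm > sp` (so that
`NP(P)` has a break at `r` where the slope drops by `sm − sp`).  Then the number of roots
`α` of `P` in `L`, counted with multiplicity, with `w α = r` equals `sm − sp`. -/
theorem statement7 {K L : Type*} [Field K] [Field L] [Algebra K L] [IsAlgClosure K L]
    (v : K → WithTop ℝ)
    (hv0 : ∀ x : K, v x = ⊤ ↔ x = 0)
    (hvmul : ∀ x y : K, v (x * y) = v x + v y)
    (hvadd : ∀ x y : K, min (v x) (v y) ≤ v (x + y))
    (w : L → WithTop ℝ)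
    (hw0 : ∀ x : L, w x = ⊤ ↔ x = 0)
    (hwmul : ∀ x y : L, w (x * y) = w x + w y)
    (hwadd : ∀ x y : L, min (w x) (w y) ≤ w (x + y))
    (hext : ∀ x : K, w (algebraMap K L x) = v x)
    (P : Polynomial K) {d : ℕ} (hd : 1 ≤ d) (hdeg : P.natDegree = d)
    (hlead : P.coeff d ≠ 0)
    (r ε sm sp bm bp : ℝ) (hε : 0 < ε) (hs : sp < sm)
    (hNPm : ∀ t ∈ Set.Icc (r - ε) r,
      IsLeast {x : WithTop ℝ | ∃ i : ℕ, P.coeff i ≠ 0 ∧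
          x = v (P.coeff i) + (((i : ℝ) * t : ℝ) : WithTop ℝ)}
        ((sm * t + bm : ℝ) : WithTop ℝ))
    (hNPp : ∀ t ∈ Set.Icc r (r + ε),
      IsLeast {x : WithTop ℝ | ∃ i : ℕ, P.coeff i ≠ 0 ∧
          x = v (P.coeff i) + (((i : ℝ) * t : ℝ) : WithTop ℝ)}
        ((sp * t + bp : ℝ) : WithTop ℝ)) :
    ((((P.map (algebraMap K L)).roots.filter
        (fun α => w α = ((r : ℝ) : WithTop ℝ))).card : ℝ)) = sm - sp :=
  statement7_general v w hw0 hwmul hwadd hext P hlead r ε sm sp bm bp hε hNPm hNPp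
end

section
/- Let K be a field with an additive real-valued valuation v, and let P ∈ K[X] be a monic polynomial of degree d ≥ 1 that splits in K, say P = ∏_{j=1}^d (X − α_j) with α_j ∈ K. Then for every t ∈ ℝ one has min{ v(c_i) + i·t : 0 ≤ i ≤ d, c_i ≠ 0 } = Σ_{j=1}^d min{ v(α_j), t }, where c_i denotes the coefficient of X^i in P. -/
/-!
For `t : ℝ`, `Q ↦ min_i (v(cᵢ) + i t)` is the Gauss valuation of slope `t`, and it suffices to
see that multiplying `Q` by `X - a` adds `min (v a) t`. The coefficients of `(X - a) Q` are
`cᵢ₋₁ - a cᵢ`, so the ultrametric inequality gives `≥`. For equality, pick an index `i`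
where the minimum `m` for `Q` is attained. If `v a < t`, the summand `a cᵢ` of the `i`-th
coefficient has strictly smaller valuation than `cᵢ₋₁`, so that coefficient contributes
exactly `v a + m`. If `t ≤ v a`, take `i` largest; then `v cᵢ < v (a cᵢ₊₁)`, and the
`(i+1)`-st coefficient contributes `t + m`.
-/

open Polynomial

namespace Polynomial

section Ring

variable {R : Type*} [Ring R] (v : AddValuation R (WithTop ℝ)) (t : ℝ)

noncomputable def gaussTerm (Q : R[X]) (i : ℕ) : WithTop ℝ :=
  v (Q.coeff i) + ((i * t : ℝ) : WithTop ℝ)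

/-- The infimum runs over the support, so that `gaussVal v t 0 = ⊤`. -/
noncomputable def gaussVal (Q : R[X]) : WithTop ℝ :=
  Q.support.inf (gaussTerm v t Q)

variable {v t}

lemma gaussTerm_zero (Q : R[X]) : gaussTerm v t Q 0 = v (Q.coeff 0) := by
  simp [gaussTerm]

lemma coe_natCast_succ_mul (n : ℕ) :
    (((n + 1 : ℕ) * t : ℝ) : WithTop ℝ) = ((n * t : ℝ) : WithTop ℝ) + t := by
  rw [← WithTop.coe_add, Nat.cast_succ, add_mul, one_mul]

lemma coe_add_gaussTerm (Q : R[X]) (n : ℕ) :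
    t + gaussTerm v t Q n = v (Q.coeff n) + (((n + 1 : ℕ) * t : ℝ) : WithTop ℝ) := by
  rw [gaussTerm, coe_natCast_succ_mul, add_comm, add_assoc]

lemma gaussVal_le_gaussTerm (Q : R[X]) (i : ℕ) : gaussVal v t Q ≤ gaussTerm v t Q i := by
  by_cases hi : i ∈ Q.support
  · exact Finset.inf_le hi
  · simp [gaussTerm, notMem_support_iff.mp hi]

lemma le_gaussVal_iff {Q : R[X]} {m : WithTop ℝ} :
    m ≤ gaussVal v t Q ↔ ∀ i, m ≤ gaussTerm v t Q i :=
  ⟨fun h i => h.trans (gaussVal_le_gaussTerm Q i), fun h => Finset.le_inf fun i _ => h i⟩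

lemma gaussVal_one : gaussVal v t (1 : R[X]) = 0 := by
  refine le_antisymm ((gaussVal_le_gaussTerm 1 0).trans_eq (by simp [gaussTerm])) ?_
  refine le_gaussVal_iff.2 fun i => ?_
  cases i <;> simp [gaussTerm, coeff_one]

lemma exists_gaussTerm_eq_gaussVal {Q : R[X]} (hQ : gaussVal v t Q ≠ ⊤) :
    ∃ i, gaussTerm v t Q i = gaussVal v t Q ∧
      ∀ j, i < j → gaussVal v t Q < gaussTerm v t Q j := by
  have hQ0 : Q.support.Nonempty :=
    Finset.nonempty_iff_ne_empty.2 fun h => hQ (by simp [gaussVal, h])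
  set S := Q.support.filter (gaussTerm v t Q · = gaussVal v t Q)
  have hS : S.Nonempty := by
    obtain ⟨i, hi, heq⟩ := Q.support.exists_mem_eq_inf hQ0 (gaussTerm v t Q)
    exact ⟨i, Finset.mem_filter.2 ⟨hi, heq.symm⟩⟩
  refine ⟨S.max' hS, (Finset.mem_filter.1 (S.max'_mem hS)).2, fun j hj => ?_⟩
  refine (gaussVal_le_gaussTerm Q j).lt_of_ne fun heq => ?_
  by_cases hjQ : j ∈ Q.support
  · exact hj.not_ge (S.le_max' j (Finset.mem_filter.2 ⟨hjQ, heq.symm⟩))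
  · simp [heq, gaussTerm, notMem_support_iff.mp hjQ] at hQ

lemma coeff_X_sub_C_mul_zero (a : R) (Q : R[X]) :
    ((X - C a) * Q).coeff 0 = -(a * Q.coeff 0) := by
  simp [mul_coeff_zero]

lemma min_add_gaussVal_le_gaussTerm_X_sub_C_mul (a : R) (Q : R[X]) (i : ℕ) :
    min (v a) t + gaussVal v t Q ≤ gaussTerm v t ((X - C a) * Q) i := by
  cases i with
  | zero =>
    rw [gaussTerm_zero, coeff_X_sub_C_mul_zero, AddValuation.map_neg, AddValuation.map_mul]
    exact add_le_add (min_le_left _ _) ((gaussVal_le_gaussTerm Q 0).trans_eq (gaussTerm_zero Q))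
  | succ n =>
    calc min (v a) t + gaussVal v t Q
        ≤ min (v (Q.coeff n) + (((n + 1 : ℕ) * t : ℝ) : WithTop ℝ))
            (v (a * Q.coeff (n + 1)) + (((n + 1 : ℕ) * t : ℝ) : WithTop ℝ)) := by
          refine le_min ?_ ?_
          · exact coe_add_gaussTerm Q n ▸
              add_le_add (min_le_right _ _) (gaussVal_le_gaussTerm Q n)
          · rw [AddValuation.map_mul, add_assoc]
            exact add_le_add (min_le_left _ _) (gaussVal_le_gaussTerm Q (n + 1))
      _ = min (v (Q.coeff n)) (v (a * Q.coeff (n + 1)))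
            + (((n + 1 : ℕ) * t : ℝ) : WithTop ℝ) :=
          min_add_add_right _ _ _
      _ ≤ gaussTerm v t ((X - C a) * Q) (n + 1) := by
          rw [gaussTerm, coeff_X_sub_C_mul]
          gcongr
          exact AddValuation.map_sub _ _ _

lemma exists_gaussTerm_X_sub_C_mul_eq_of_le {a : R} {Q : R[X]} (hQ : gaussVal v t Q ≠ ⊤)
    (ha : (t : WithTop ℝ) ≤ v a) :
    ∃ i, gaussTerm v t ((X - C a) * Q) i = t + gaussVal v t Q := by
  obtain ⟨i, hi, hmax⟩ := exists_gaussTerm_eq_gaussVal hQ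
  have hlt : v (Q.coeff i) < v (a * Q.coeff (i + 1)) := by
    have h := hmax (i + 1) (lt_add_one i)
    rw [← hi, gaussTerm, gaussTerm, coe_natCast_succ_mul, ← add_assoc,
      add_right_comm _ _ (t : WithTop ℝ)] at h
    rw [AddValuation.map_mul]
    calc v (Q.coeff i) < v (Q.coeff (i + 1)) + t :=
          (WithTop.add_lt_add_iff_right WithTop.coe_ne_top).1 h
      _ ≤ v a + v (Q.coeff (i + 1)) := by rw [add_comm]; gcongr
  refine ⟨i + 1, ?_⟩
  rw [gaussTerm, coeff_X_sub_C_mul, AddValuation.map_sub_eq_of_lt_left _ hlt,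
    coe_natCast_succ_mul, ← add_assoc, ← hi, gaussTerm, add_comm]

lemma exists_gaussTerm_X_sub_C_mul_eq_of_lt {a : R} {Q : R[X]} (hQ : gaussVal v t Q ≠ ⊤)
    (ha : v a < t) : ∃ i, gaussTerm v t ((X - C a) * Q) i = v a + gaussVal v t Q := by
  obtain ⟨i, hi, -⟩ := exists_gaussTerm_eq_gaussVal hQ
  refine ⟨i, ?_⟩
  cases i with
  | zero =>
    rw [gaussTerm_zero, coeff_X_sub_C_mul_zero, AddValuation.map_neg, AddValuation.map_mul, ← hi,
      gaussTerm_zero]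
  | succ n =>
    have hlt : v (a * Q.coeff (n + 1)) < v (Q.coeff n) := by
      have h : v a + gaussVal v t Q < t + gaussTerm v t Q n :=
        (WithTop.add_lt_add_right hQ ha).trans_le (by gcongr; exact gaussVal_le_gaussTerm Q n)
      rw [← hi, coe_add_gaussTerm, gaussTerm, ← add_assoc] at h
      rw [AddValuation.map_mul]
      exact (WithTop.add_lt_add_iff_right WithTop.coe_ne_top).1 h
    rw [gaussTerm, coeff_X_sub_C_mul, AddValuation.map_sub_eq_of_lt_right _ hlt,
      AddValuation.map_mul, add_assoc, ← gaussTerm, hi]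

lemma gaussVal_X_sub_C_mul (a : R) (Q : R[X]) :
    gaussVal v t ((X - C a) * Q) = min (v a) t + gaussVal v t Q := by
  refine le_antisymm ?_ (le_gaussVal_iff.2 (min_add_gaussVal_le_gaussTerm_X_sub_C_mul a Q))
  rcases eq_or_ne (gaussVal v t Q) ⊤ with hQ | hQ
  · simp [hQ]
  obtain ⟨i, hi⟩ : ∃ i, gaussTerm v t ((X - C a) * Q) i = min (v a) t + gaussVal v t Q := by
    rcases le_or_gt (t : WithTop ℝ) (v a) with ha | ha
    · rw [min_eq_right ha]; exact exists_gaussTerm_X_sub_C_mul_eq_of_le hQ ha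
    · rw [min_eq_left ha.le]; exact exists_gaussTerm_X_sub_C_mul_eq_of_lt hQ ha
  exact hi ▸ gaussVal_le_gaussTerm _ i

lemma isLeast_gaussVal {Q : R[X]} (hQ : Q ≠ 0) :
    IsLeast {x | ∃ i, Q.coeff i ≠ 0 ∧ x = gaussTerm v t Q i} (gaussVal v t Q) := by
  refine ⟨?_, fun x ⟨i, _, hx⟩ => hx ▸ gaussVal_le_gaussTerm Q i⟩
  obtain ⟨i, hi, heq⟩ := Q.support.exists_mem_eq_inf (support_nonempty.2 hQ) (gaussTerm v t Q)
  exact ⟨i, mem_support_iff.1 hi, heq⟩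

end Ring

lemma gaussVal_prod_X_sub_C {R ι : Type*} [CommRing R] (v : AddValuation R (WithTop ℝ))
    (t : ℝ) (α : ι → R) (s : Finset ι) :
    gaussVal v t (∏ j ∈ s, (X - C (α j))) = ∑ j ∈ s, min (v (α j)) t := by
  classical
  induction s using Finset.induction_on with
  | empty => simp [gaussVal_one]
  | insert j s hj ih =>
    rw [Finset.prod_insert hj, Finset.sum_insert hj, gaussVal_X_sub_C_mul, ih]

end Polynomial

theorem statement8_general {K : Type*} [Field K]
    (v : K → WithTop ℝ)
    (hv0 : ∀ x : K, v x = ⊤ ↔ x = 0)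
    (hvmul : ∀ x y : K, v (x * y) = v x + v y)
    (hvadd : ∀ x y : K, min (v x) (v y) ≤ v (x + y))
    {d : ℕ} (α : Fin d → K) (P : K[X])
    (hP : P = ∏ j : Fin d, (X - C (α j))) :
    ∀ t : ℝ,
      IsLeast {x : WithTop ℝ | ∃ i : ℕ, P.coeff i ≠ 0 ∧
          x = v (P.coeff i) + (((i : ℝ) * t : ℝ) : WithTop ℝ)}
        (∑ j : Fin d, min (v (α j)) ((t : ℝ) : WithTop ℝ)) := by
  intro t
  have hv1 : v 1 = 0 := (WithTop.add_left_cancel ((hv0 1).not.2 one_ne_zero)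
    (by rw [add_zero, ← hvmul, one_mul])).symm
  let w := AddValuation.of v ((hv0 0).2 rfl) hv1 hvadd hvmul
  have hP0 : P ≠ 0 := hP ▸ (monic_prod_of_monic _ _ fun j _ => monic_X_sub_C (α j)).ne_zero
  have hgauss : gaussVal w t P = ∑ j, min (v (α j)) t := hP ▸ gaussVal_prod_X_sub_C w t α _
  exact hgauss ▸ isLeast_gaussVal hP0

/-- Let `K` be a field with an additive real-valued valuation `v` and let
`P ∈ K[X]` be a monic polynomial of degree `d ≥ 1` that splits in `K`, say
`P = ∏_{j=1}^d (X − α_j)`.  Then for every `t : ℝ`, the value at `t` of the complete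
valuation polygon of `P`, i.e. `min{v(cᵢ) + i·t : cᵢ ≠ 0}`, equals
`Σ_{j=1}^d min(v(α_j), t)`. -/
theorem statement8 {K : Type*} [Field K]
    (v : K → WithTop ℝ)
    (hv0 : ∀ x : K, v x = ⊤ ↔ x = 0)
    (hvmul : ∀ x y : K, v (x * y) = v x + v y)
    (hvadd : ∀ x y : K, min (v x) (v y) ≤ v (x + y))
    {d : ℕ} (hd : 1 ≤ d) (α : Fin d → K) (P : K[X])
    (hP : P = ∏ j : Fin d, (X - C (α j))) :
    ∀ t : ℝ,
      IsLeast {x : WithTop ℝ | ∃ i : ℕ, P.coeff i ≠ 0 ∧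
          x = v (P.coeff i) + (((i : ℝ) * t : ℝ) : WithTop ℝ)}
        (∑ j : Fin d, min (v (α j)) ((t : ℝ) : WithTop ℝ)) :=
  statement8_general v hv0 hvmul hvadd α P hP
end

section
/- Let K be a perfect field of characteristic p > 0 equipped with an additive real-valued valuation v, let c ≥ 0 be a real number, and let a : ℕ → K be a sequence with v(a_k) ≥ −c for every k. For m ≥ 0 set S_m = Σ_{k=0}^m a_k^{1/p^k}. Then the sequence m ↦ min{0, v(S_m)} (with the convention min{0, v(0)} = min{0, ∞} = 0) converges to a real limit as m → ∞. -/
open Filter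

/-! The partial sums change by `a_{m+1}^{1/p^{m+1}}`, whose valuation is at least `-c/p^{m+1}`.
By the ultrametric inequality, applied to `S_{m+1} = S_m + t` and `S_m = S_{m+1} - t`, the
truncated valuation `min 0 (v ·)` moves by at most `c/p^{m+1}` in that step, so the sequence is
Cauchy with geometrically decaying increments. -/

def WithTop.truncNeg (x : WithTop ℝ) : ℝ := min 0 (x.untopD 0)

lemma WithTop.truncNeg_sub_le_of_min_le {x y : WithTop ℝ} {d : ℝ} (hd : 0 ≤ d)
    (h : min x ((-d : ℝ) : WithTop ℝ) ≤ y) : x.truncNeg - d ≤ y.truncNeg := by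
  induction x using WithTop.recTopCoe <;> induction y using WithTop.recTopCoe <;>
    simp only [WithTop.truncNeg, WithTop.untopD_top, WithTop.untopD_coe, min_top_left] at h ⊢ <;>
    norm_cast at h <;> grind

lemma WithTop.eq_zero_of_eq_add_self {x : WithTop ℝ} (hx : x ≠ ⊤) (h : x = x + x) : x = 0 := by
  lift x to ℝ using hx
  norm_cast at h ⊢
  linarith

lemma WithTop.coe_div_le_of_coe_le_nsmul {r : ℝ} {n : ℕ} {w : WithTop ℝ} (hn : 0 < n)
    (h : (r : WithTop ℝ) ≤ n • w) : ((r / n : ℝ) : WithTop ℝ) ≤ w := by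
  induction w using WithTop.recTopCoe with
  | top => exact le_top
  | coe s =>
    rw [← WithTop.coe_nsmul, WithTop.coe_le_coe, nsmul_eq_mul] at h
    rw [WithTop.coe_le_coe, div_le_iff₀ (by positivity)]
    linarith

namespace AddValuation

variable {R : Type*} [Ring R] (v : AddValuation R (WithTop ℝ))

lemma abs_truncNeg_add_sub_le {x t : R} {d : ℝ} (hd : 0 ≤ d) (ht : ((-d : ℝ) : WithTop ℝ) ≤ v t) :
    |(v (x + t)).truncNeg - (v x).truncNeg| ≤ d := by
  have up : (v x).truncNeg - d ≤ (v (x + t)).truncNeg :=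
    WithTop.truncNeg_sub_le_of_min_le hd ((min_le_min_left _ ht).trans (v.map_add x t))
  have down : (v (x + t)).truncNeg - d ≤ (v x).truncNeg := by
    have ht' : ((-d : ℝ) : WithTop ℝ) ≤ v (-t) := by rwa [v.map_neg]
    refine WithTop.truncNeg_sub_le_of_min_le hd ((min_le_min_left _ ht').trans ?_)
    simpa using v.map_add (x + t) (-t)
  rw [abs_sub_le_iff]
  constructor <;> linarith

lemma cauchySeq_truncNeg_partialSum {z : ℕ → R} {c q : ℝ} (hc : 0 ≤ c) (hq0 : 0 ≤ q)
    (hq1 : q < 1) (hz : ∀ k, ((-(c * q ^ k) : ℝ) : WithTop ℝ) ≤ v (z k)) :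
    CauchySeq fun m => (v (∑ k ∈ Finset.range (m + 1), z k)).truncNeg := by
  refine cauchySeq_of_le_geometric q (c * q) hq1 fun m => ?_
  rw [dist_comm, Real.dist_eq, Finset.sum_range_succ _ (m + 1), mul_assoc, ← pow_succ']
  exact v.abs_truncNeg_add_sub_le (by positivity) (hz (m + 1))

lemma coe_div_le_iterate_frobeniusEquiv_symm {K : Type*} [CommRing K] {p : ℕ} [ExpChar K p]
    [PerfectRing K p] (v : AddValuation K (WithTop ℝ)) {r : ℝ} {x : K}
    (hx : (r : WithTop ℝ) ≤ v x) (k : ℕ) :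
    ((r / p ^ k : ℝ) : WithTop ℝ) ≤ v ((frobeniusEquiv K p).symm^[k] x) := by
  have h := WithTop.coe_div_le_of_coe_le_nsmul (pow_pos (expChar_pos K p) k) <|
    hx.trans_eq (by rw [← v.map_pow, iterate_frobeniusEquiv_symm_pow_p_pow])
  rwa [Nat.cast_pow] at h

end AddValuation

theorem statement10_general {p : ℕ} [Fact p.Prime] {K : Type*} [Field K] [ExpChar K p]
    [PerfectRing K p]
    (v : K → WithTop ℝ)
    (hv0 : ∀ x : K, v x = ⊤ ↔ x = 0)
    (hvmul : ∀ x y : K, v (x * y) = v x + v y)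
    (hvadd : ∀ x y : K, min (v x) (v y) ≤ v (x + y))
    (c : ℝ) (hc : 0 ≤ c) (a : ℕ → K)
    (ha : ∀ k : ℕ, ((-c : ℝ) : WithTop ℝ) ≤ v (a k)) :
    ∃ lim : ℝ, Tendsto
      (fun m : ℕ =>
        min 0 ((v (∑ k ∈ Finset.range (m + 1),
          (fun y : K => (frobeniusEquiv K p).symm y)^[k] (a k))).untopD 0))
      atTop (nhds lim) := by
  have hv1 : v 1 = 0 :=
    WithTop.eq_zero_of_eq_add_self (fun h => one_ne_zero ((hv0 1).1 h)) (by simpa using hvmul 1 1)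
  let w := AddValuation.of v ((hv0 0).2 rfl) hv1 hvadd hvmul
  have hp : (1 : ℝ) < p := by exact_mod_cast (Fact.out : p.Prime).one_lt
  have hroot (k : ℕ) : ((-(c * (p : ℝ)⁻¹ ^ k) : ℝ) : WithTop ℝ) ≤
      w ((frobeniusEquiv K p).symm^[k] (a k)) := by
    simpa [div_eq_mul_inv, neg_mul] using w.coe_div_le_iterate_frobeniusEquiv_symm (ha k) k
  exact cauchySeq_tendsto_of_complete <|
    w.cauchySeq_truncNeg_partialSum hc (by positivity) (inv_lt_one_of_one_lt₀ hp) hroot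

/-- Let `K` be a perfect field of characteristic `p > 0` with an additive
real-valued valuation `v`, let `c ≥ 0`, and let `a : ℕ → K` satisfy `v (a k) ≥ −c` for all
`k`.  Setting `S_m = Σ_{k=0}^m a_k^{1/p^k}` (the `p^k`-th root taken via the inverse of the
Frobenius equivalence), the sequence `m ↦ min{0, v(S_m)}` (with `min{0, ∞} = 0`) converges
to a real limit. -/
theorem statement10 {p : ℕ} [Fact p.Prime] {K : Type*} [Field K] [ExpChar K p]
    [CharP K p] [PerfectRing K p]
    (v : K → WithTop ℝ)
    (hv0 : ∀ x : K, v x = ⊤ ↔ x = 0)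
    (hvmul : ∀ x y : K, v (x * y) = v x + v y)
    (hvadd : ∀ x y : K, min (v x) (v y) ≤ v (x + y))
    (c : ℝ) (hc : 0 ≤ c) (a : ℕ → K)
    (ha : ∀ k : ℕ, ((-c : ℝ) : WithTop ℝ) ≤ v (a k)) :
    ∃ lim : ℝ, Tendsto
      (fun m : ℕ =>
        min 0 ((v (∑ k ∈ Finset.range (m + 1),
          (fun y : K => (frobeniusEquiv K p).symm y)^[k] (a k))).untopD 0))
      atTop (nhds lim) :=
  statement10_general v hv0 hvmul hvadd c hc a ha
end

section
/- Let R be a commutative ring, A a commutative R-algebra, and I ⊆ A an ideal such that the R-module I^n/I^{n+1} is flat for every n ≥ 0. Let R' be any commutative R-algebra and set A' = A ⊗_R R'. Then for every n ≥ 0: (1) the canonical map I^n ⊗_R R' → I^n·A' (onto the ideal of A' generated by the image of I^n) is an isomorphism of R'-modules, and (2) the canonical map (I^n/I^{n+1}) ⊗_R R' → (I^n·A')/(I^{n+1}·A') is an isomorphism of R'-modules. -/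
/-!
If `P ⧸ N` is flat then `Tor₁(P ⧸ N, R') = 0`, so `N ⊗ R' → P ⊗ R'` is injective.
Applied down the chain `A = I⁰ ⊇ I¹ ⊇ ⋯` with flat subquotients this makes every
`Iⁿ ⊗ R' → A ⊗ R'` injective; its image is `Iⁿ·A'` by right exactness of `⊗`. Injectivity of
`Iⁿ ⊗ R' → A'` then identifies the kernel of `Iⁿ ⊗ R' → A' ⧸ Iⁿ⁺¹·A'` with the image of `Iⁿ⁺¹ ⊗ R'`.
-/

open scoped TensorProduct

open Function LinearMap

namespace Submodule

variable {R M Q : Type*} [CommRing R] [AddCommGroup M] [Module R M] [AddCommGroup Q] [Module R Q]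

theorem rTensor_subtype_injective_of_flat_quotient (N : Submodule R M) [Module.Flat R (M ⧸ N)] :
    Injective (N.subtype.rTensor Q) := by
  let π : (Q →₀ R) →ₗ[R] Q := Finsupp.linearCombination R id
  have hπ : Surjective π := Finsupp.linearCombination_surjective R surjective_id
  have hker : Injective ((ker π).subtype.rTensor (M ⧸ N)) :=
    Module.Flat.rTensor_preserves_injective_linearMap _ (ker π).injective_subtype
  have hfree : Injective (N.subtype.lTensor (Q →₀ R)) :=
    Module.Flat.lTensor_preserves_injective_linearMap _ N.injective_subtype
  rw [← lTensor_inj_iff_rTensor_inj]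
  exact lTensor_injective_of_exact_of_exact_of_rTensor_injective (M₁ := ker π)
    (exact_subtype_ker_map π) hπ (exact_subtype_mkQ N) N.mkQ_surjective hker hfree

theorem rTensor_subtype_injective_of_le {N P : Submodule R M} (hNP : N ≤ P)
    [Module.Flat R (P ⧸ N.comap P.subtype)] (hP : Injective (P.subtype.rTensor Q)) :
    Injective (N.subtype.rTensor Q) := by
  have : N.subtype = P.subtype ∘ₗ (N.comap P.subtype).subtype ∘ₗ
      (comapSubtypeEquivOfLe hNP).symm.toLinearMap := rfl
  rw [this, rTensor_comp, rTensor_comp, ← LinearEquiv.coe_rTensor]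
  exact hP.comp <| (rTensor_subtype_injective_of_flat_quotient _).comp (LinearEquiv.injective _)

theorem ker_mkQ_comp_rTensor_subtype {N P : Submodule R M} (hNP : N ≤ P)
    (hP : Injective (P.subtype.rTensor Q)) :
    ker ((range (N.subtype.rTensor Q)).mkQ ∘ₗ P.subtype.rTensor Q) =
      range ((inclusion hNP).rTensor Q) := by
  rw [ker_comp, ker_mkQ, ← subtype_comp_inclusion N P hNP, rTensor_comp, range_comp,
    comap_map_eq_of_injective hP]

end Submodule

theorem Ideal.rTensor_subtype_pow_injective {R A Q : Type*} [CommRing R] [CommRing A]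
    [Algebra R A] [AddCommGroup Q] [Module R Q] (I : Ideal A)
    (hflat : ∀ n : ℕ, Module.Flat R
      ((I ^ n).restrictScalars R ⧸ ((I ^ (n + 1)).restrictScalars R).comap
        ((I ^ n).restrictScalars R).subtype))
    (n : ℕ) :
    Injective (((I ^ n).restrictScalars R).subtype.rTensor Q) := by
  induction n with
  | zero =>
    rw [pow_zero, one_eq_top, Submodule.restrictScalars_top]
    exact (Submodule.topEquiv.rTensor Q).injective
  | succ n ih =>
    have := hflat n
    exact Submodule.rTensor_subtype_injective_of_le
      (Submodule.restrictScalars_mono R (pow_le_pow_right n.le_succ)) ih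

/-- Let `R` be a commutative ring, `A` a commutative `R`-algebra and
`I ⊆ A` an ideal such that each `R`-module `Iⁿ/Iⁿ⁺¹` is flat.  Let `R'` be a commutative
`R`-algebra and `A' = A ⊗[R] R'`.  Then for every `n`:
(1) the canonical map `Iⁿ ⊗[R] R' → A'` is injective with image the ideal `Iⁿ·A'`
generated by the image of `Iⁿ` (so `Iⁿ ⊗[R] R' ≅ Iⁿ·A'`), and
(2) the canonical map `(Iⁿ/Iⁿ⁺¹) ⊗[R] R' → (Iⁿ·A')/(Iⁿ⁺¹·A')` is an isomorphism,
expressed by saying that the composite `ψ : Iⁿ ⊗[R] R' → A' → A'/(Iⁿ⁺¹·A')` has image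
`(Iⁿ·A')/(Iⁿ⁺¹·A')` and kernel exactly the image of `Iⁿ⁺¹ ⊗[R] R' → Iⁿ ⊗[R] R'`
(recall `(Iⁿ/Iⁿ⁺¹) ⊗[R] R'` is the cokernel of `Iⁿ⁺¹ ⊗[R] R' → Iⁿ ⊗[R] R'`). -/
theorem statement12 {R A R' : Type*} [CommRing R] [CommRing A] [Algebra R A]
    [CommRing R'] [Algebra R R'] (I : Ideal A)
    (hflat : ∀ n : ℕ, Module.Flat R
      ((Submodule.restrictScalars R (I ^ n)) ⧸
        (Submodule.comap (Submodule.restrictScalars R (I ^ n)).subtype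
          (Submodule.restrictScalars R (I ^ (n + 1))))))
    (n : ℕ) :
    Function.Injective
      (TensorProduct.map (Submodule.restrictScalars R (I ^ n)).subtype
        (LinearMap.id : R' →ₗ[R] R')) ∧
    LinearMap.range
      (TensorProduct.map (Submodule.restrictScalars R (I ^ n)).subtype
        (LinearMap.id : R' →ₗ[R] R'))
      = Submodule.restrictScalars R
          (Ideal.map (Algebra.TensorProduct.includeLeft : A →ₐ[R] A ⊗[R] R') (I ^ n)) ∧
    LinearMap.range
      ((Submodule.restrictScalars R
          (Ideal.map (Algebra.TensorProduct.includeLeft : A →ₐ[R] A ⊗[R] R')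
            (I ^ (n + 1)))).mkQ
        ∘ₗ TensorProduct.map (Submodule.restrictScalars R (I ^ n)).subtype
            (LinearMap.id : R' →ₗ[R] R'))
      = Submodule.map
          (Submodule.restrictScalars R
            (Ideal.map (Algebra.TensorProduct.includeLeft : A →ₐ[R] A ⊗[R] R')
              (I ^ (n + 1)))).mkQ
          (Submodule.restrictScalars R
            (Ideal.map (Algebra.TensorProduct.includeLeft : A →ₐ[R] A ⊗[R] R') (I ^ n))) ∧
    LinearMap.ker
      ((Submodule.restrictScalars R
          (Ideal.map (Algebra.TensorProduct.includeLeft : A →ₐ[R] A ⊗[R] R')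
            (I ^ (n + 1)))).mkQ
        ∘ₗ TensorProduct.map (Submodule.restrictScalars R (I ^ n)).subtype
            (LinearMap.id : R' →ₗ[R] R'))
      = LinearMap.range
          (TensorProduct.map
            (Submodule.inclusion
              (show Submodule.restrictScalars R (I ^ (n + 1)) ≤
                  Submodule.restrictScalars R (I ^ n) from
                fun x hx => Ideal.pow_le_pow_right (Nat.le_succ n) hx))
            (LinearMap.id : R' →ₗ[R] R')) := by
  have hrange (m : ℕ) := (Ideal.map_includeLeft_eq (R := R) (B := R') (I ^ m)).symm
  have hinj := I.rTensor_subtype_pow_injective (Q := R') hflat n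
  refine ⟨hinj, hrange n, by rw [range_comp]; exact congrArg _ (hrange n), ?_⟩
  rw [← hrange (n + 1)]
  exact Submodule.ker_mkQ_comp_rTensor_subtype _ hinj
end

section
/- Let A be an integral domain with fraction field K, and let B be a commutative A-algebra which is an integral domain, is flat as an A-module, and for which the structure map A → B is injective. Then for every intermediate ring R with A ⊆ R ⊆ K, the ring R ⊗_A B is an integral domain. -/
open scoped TensorProduct

/-!
Since `K` is the localization of `A` at its non-zero-divisors, `K ⊗[A] B` is the localization
of `B` at their images, which are nonzero because `A → B` is injective; hence `K ⊗[A] B` is a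
domain. Flatness of `B` makes `R ⊗[A] B → K ⊗[A] B` injective, so `R ⊗[A] B` is a subring
of a domain.
-/

attribute [local instance] Algebra.TensorProduct.rightAlgebra in
theorem IsLocalization.isDomain_tensorProduct {A L B : Type*} [CommRing A] [CommRing L]
    [Algebra A L] [CommRing B] [IsDomain B] [Algebra A B] (M : Submonoid A) [IsLocalization M L]
    (hM : Algebra.algebraMapSubmonoid B M ≤ nonZeroDivisors B) :
    IsDomain (L ⊗[A] B) :=
  IsLocalization.isDomain_of_le_nonZeroDivisors (L ⊗[A] B) hM

theorem Algebra.TensorProduct.map_id_injective_of_flat {A S T B : Type*} [CommRing A]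
    [Ring S] [Ring T] [Ring B] [Algebra A S] [Algebra A T] [Algebra A B] [Module.Flat A B]
    (f : S →ₐ[A] T) (hf : Function.Injective f) :
    Function.Injective (Algebra.TensorProduct.map f (AlgHom.id A B)) :=
  Module.Flat.rTensor_preserves_injective_linearMap f.toLinearMap hf

theorem statement13_general {A K B : Type*} [CommRing A]
    [Field K] [Algebra A K] [IsFractionRing A K]
    [CommRing B] [IsDomain B] [Algebra A B] [Module.Flat A B]
    (hinj : Function.Injective (algebraMap A B))
    (R : Subalgebra A K) :
    IsDomain (R ⊗[A] B) := by
  have : IsDomain (K ⊗[A] B) := IsLocalization.isDomain_tensorProduct (nonZeroDivisors A)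
    (map_le_nonZeroDivisors_of_injective _ hinj le_rfl)
  exact (Algebra.TensorProduct.map_id_injective_of_flat R.val Subtype.val_injective).isDomain
    (Algebra.TensorProduct.map R.val (AlgHom.id A B)).toRingHom

/-- Let `A` be an integral domain with fraction field `K`, and let `B`
be a commutative `A`-algebra which is an integral domain, flat as an `A`-module, and with
injective structure map `A → B`.  Then for every intermediate ring `A ⊆ R ⊆ K` (an
`A`-subalgebra of `K`), the ring `R ⊗[A] B` is an integral domain. -/
theorem statement13 {A K B : Type*} [CommRing A] [IsDomain A]
    [Field K] [Algebra A K] [IsFractionRing A K]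
    [CommRing B] [IsDomain B] [Algebra A B] [Module.Flat A B]
    (hinj : Function.Injective (algebraMap A B))
    (R : Subalgebra A K) :
    IsDomain (R ⊗[A] B) :=
  statement13_general hinj R
end
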